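/- arXiv:2211.01030 — 10 statements merged into one kernel-verified Lean document; each statement's English description precedes it below -/
import Mathlib

section
/- Every finite, hereditary-family-indexed greedy basis is suppression unconditional with the same constant: if a basis (e_n) of a Banach space X is C-F-greedy (i.e., ‖x − G_m(x)‖ ≤ C·σ_m^F(x) for all x, m, and greedy operators G_m), then for every x ∈ X and every finite set B ∈ F, ‖x − P_B(x)‖ ≤ C‖x‖. -/
/-- A (semi-normalized) basis of a Banach space `X`: a total sequence `e` with
biorthogonal functionals `f`, both semi-normalized. -/
structure GreedyBasis (X : Type*) [NormedAddCommGroup X] [NormedSpace ℝ X] where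
  e : ℕ → X
  f : ℕ → X →L[ℝ] ℝ
  biorth : ∀ i j, f i (e j) = if i = j then (1 : ℝ) else 0
  total : (Submodule.span ℝ (Set.range e)).topologicalClosure = ⊤
  c₁ : ℝ
  c₂ : ℝ
  hc₁ : 0 < c₁
  he : ∀ n, c₁ ≤ ‖e n‖ ∧ ‖e n‖ ≤ c₂
  hf : ∀ n, c₁ ≤ ‖f n‖ ∧ ‖f n‖ ≤ c₂

/-- A family of finite subsets of `ℕ` is hereditary if it is closed under subsets. -/
def Hereditary (F : Set (Finset ℕ)) : Prop := ∀ A ∈ F, ∀ B ⊆ A, B ∈ F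

namespace GreedyBasis

variable {X : Type*} [NormedAddCommGroup X] [NormedSpace ℝ X] (b : GreedyBasis X)

/-- The coordinate projection `P_A x = ∑_{n ∈ A} e_n^*(x) e_n`. -/
noncomputable def proj (A : Finset ℕ) (x : X) : X := ∑ n ∈ A, b.f n x • b.e n

/-- `A` is a greedy set for `x`: every coefficient inside `A` dominates every
coefficient outside `A`. -/
def IsGreedySet (x : X) (A : Finset ℕ) : Prop :=
  ∀ n ∈ A, ∀ m, m ∉ A → |b.f m x| ≤ |b.f n x|

/-- `σ_m^F(x)`: the best `m`-term approximation error with supports in `F`. -/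
noncomputable def sigmaF (F : Set (Finset ℕ)) (m : ℕ) (x : X) : ℝ :=
  sInf {r : ℝ | ∃ (A : Finset ℕ) (a : ℕ → ℝ), A.card ≤ m ∧ A ∈ F ∧
    r = ‖x - ∑ n ∈ A, a n • b.e n‖}

/-- The basis is `C`-`F`-greedy: `‖x - G_m(x)‖ ≤ C σ_m^F(x)` for all greedy sums. -/
def IsFGreedy (F : Set (Finset ℕ)) (C : ℝ) : Prop :=
  ∀ (x : X) (A : Finset ℕ), b.IsGreedySet x A →
    ‖x - b.proj A x‖ ≤ C * b.sigmaF F A.card x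

/-- The basis is `C`-`F`-almost greedy:
`‖x - G_m(x)‖ ≤ C inf{‖x - P_A x‖ : |A| ≤ m, A ∈ F}`. -/
def IsFAlmostGreedy (F : Set (Finset ℕ)) (C : ℝ) : Prop :=
  ∀ (x : X) (A : Finset ℕ), b.IsGreedySet x A →
    ‖x - b.proj A x‖ ≤ C * sInf {r : ℝ | ∃ B : Finset ℕ, B.card ≤ A.card ∧ B ∈ F ∧
      r = ‖x - b.proj B x‖}

/-- Property (A, F) with constant `C`. -/
def PropertyA (F : Set (Finset ℕ)) (C : ℝ) : Prop :=
  ∀ (x : X) (A B : Finset ℕ) (ε c : ℕ → ℝ),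
    (∀ n, |b.f n x| ≤ 1) → A ∈ F → A.card ≤ B.card → Disjoint A B →
    (∀ n ∈ A, b.f n x = 0) → (∀ n ∈ B, b.f n x = 0) →
    (∀ i ∈ A, |ε i| = 1) → (∀ n ∈ B, 1 ≤ |c n|) →
    ‖x + ∑ i ∈ A, ε i • b.e i‖ ≤ C * ‖x + ∑ n ∈ B, c n • b.e n‖

end GreedyBasis

/-- A `C`-`F`-greedy basis is `C`-`F`-suppression unconditional:
`‖x − P_B(x)‖ ≤ C‖x‖` for every `x` and every `B ∈ F`. -/
theorem stmt4 {X : Type*} [NormedAddCommGroup X] [NormedSpace ℝ X]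
    (b : GreedyBasis X) (F : Set (Finset ℕ)) (hF : Hereditary F)
    (C : ℝ) (hC : 1 ≤ C) (hg : b.IsFGreedy F C) :
    ∀ (x : X), ∀ B ∈ F, ‖x - b.proj B x‖ ≤ C * ‖x‖ := by
  intro x B hB
  set M : ℝ := b.c₂ * ‖x‖ with hMdef
  have hc₂ : 0 < b.c₂ := lt_of_lt_of_le b.hc₁ ((b.hf 0).1.trans (b.hf 0).2)
  have hM0 : 0 ≤ M := mul_nonneg hc₂.le (norm_nonneg x)
  have hcoef : ∀ n, |b.f n x| ≤ M := fun n => by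
    calc |b.f n x| = ‖b.f n x‖ := (Real.norm_eq_abs _).symm
      _ ≤ ‖b.f n‖ * ‖x‖ := (b.f n).le_opNorm x
      _ ≤ M := mul_le_mul_of_nonneg_right (b.hf n).2 (norm_nonneg x)
  set y : X := x - b.proj B x + ∑ n ∈ B, M • b.e n with hydef
  have hfy_in : ∀ n ∈ B, b.f n y = M := by
    intro n hn
    simp only [hydef, GreedyBasis.proj, map_add, map_sub, map_sum, map_smul,
      b.biorth, smul_eq_mul, mul_ite, mul_one, mul_zero]
    rw [Finset.sum_ite_eq B n (fun m => b.f m x), Finset.sum_ite_eq B n (fun _ => M)]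
    simp [hn]
  have hfy_out : ∀ n, n ∉ B → b.f n y = b.f n x := by
    intro n hn
    simp only [hydef, GreedyBasis.proj, map_add, map_sub, map_sum, map_smul,
      b.biorth, smul_eq_mul, mul_ite, mul_one, mul_zero]
    rw [Finset.sum_ite_eq B n (fun m => b.f m x), Finset.sum_ite_eq B n (fun _ => M)]
    simp [hn]
  have hgset : b.IsGreedySet y B := by
    intro n hn m hm
    rw [hfy_in n hn, hfy_out m hm, abs_of_nonneg hM0]
    exact hcoef m
  have hy : y - b.proj B y = x - b.proj B x := by
    have hproj : b.proj B y = ∑ n ∈ B, M • b.e n :=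
      Finset.sum_congr rfl fun n hn => by rw [hfy_in n hn]
    rw [hproj, hydef]; abel
  have hσ : b.sigmaF F B.card y ≤ ‖x‖ := by
    apply csInf_le
    · exact ⟨0, fun r hr => by
        obtain ⟨A, a, _, _, hr⟩ := hr
        exact hr ▸ norm_nonneg _⟩
    · refine ⟨B, fun n => M - b.f n x, le_rfl, hB, ?_⟩
      have : y - ∑ n ∈ B, (M - b.f n x) • b.e n = x := by
        simp only [hydef, GreedyBasis.proj, sub_smul, Finset.sum_sub_distrib]
        abel
      rw [this]
  calc ‖x - b.proj B x‖ = ‖y - b.proj B y‖ := by rw [hy]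
    _ ≤ C * b.sigmaF F B.card y := hg y B hgset
    _ ≤ C * ‖x‖ := mul_le_mul_of_nonneg_left hσ (by linarith)
end

section
/- If a basis (e_n) of a Banach space X is C-F-greedy, then it has C-Property (A, F): for all x ∈ X with ‖x‖_∞ ≤ 1, all finite sets A, B with |A| ≤ |B|, A ∈ F, A, B, supp(x) pairwise disjoint, all signs (ε_i) and scalars |b_n| ≥ 1, one has ‖x + Σ_{i∈A} ε_i e_i‖ ≤ C‖x + Σ_{n∈B} b_n e_n‖. -/
/-- A `C`-`F`-greedy basis has `C`-Property (A, F). -/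
theorem stmt5 {X : Type*} [NormedAddCommGroup X] [NormedSpace ℝ X]
    (b : GreedyBasis X) (F : Set (Finset ℕ)) (hF : Hereditary F)
    (C : ℝ) (hC : 1 ≤ C) (hg : b.IsFGreedy F C) :
    b.PropertyA F C := by
  intro x A B ε c hx hA hAB hdisj hxA hxB hε hc
  set y : X := x + ∑ i ∈ A, ε i • b.e i + ∑ n ∈ B, c n • b.e n with hy
  have hfy : ∀ m, b.f m y =
      b.f m x + (if m ∈ A then ε m else 0) + (if m ∈ B then c m else 0) := by
    intro m
    simp only [hy, map_add, map_sum, map_smul, b.biorth, smul_eq_mul, mul_ite,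
      mul_one, mul_zero]
    rw [Finset.sum_ite_eq A m ε, Finset.sum_ite_eq B m c]
  have hyB : ∀ n ∈ B, b.f n y = c n := by
    intro n hn
    have hnA : n ∉ A := fun h => (hdisj.forall_ne_finset h hn) rfl
    simp [hfy n, hxB n hn, hnA, hn]
  have hyA : ∀ n ∈ A, b.f n y = ε n := by
    intro n hn
    have hnB : n ∉ B := fun h => (hdisj.forall_ne_finset hn h) rfl
    simp [hfy n, hxA n hn, hnB, hn]
  have hyO : ∀ m, m ∉ A → m ∉ B → b.f m y = b.f m x := by
    intro m h1 h2; simp [hfy m, h1, h2]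
  have hgs : b.IsGreedySet y B := by
    intro n hn m hm
    rw [hyB n hn]
    have h1 : (1:ℝ) ≤ |c n| := hc n hn
    by_cases hmA : m ∈ A
    · rw [hyA m hmA, hε m hmA]; exact h1
    · rw [hyO m hmA hm]; exact le_trans (hx m) h1
  have hproj : b.proj B y = ∑ n ∈ B, c n • b.e n :=
    Finset.sum_congr rfl fun n hn => by rw [hyB n hn]
  have h1 : y - b.proj B y = x + ∑ i ∈ A, ε i • b.e i := by
    rw [hproj, hy]; abel
  have h2 : y - ∑ n ∈ A, ε n • b.e n = x + ∑ n ∈ B, c n • b.e n := by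
    rw [hy]; abel
  have hmem : ‖x + ∑ n ∈ B, c n • b.e n‖ ∈ {r : ℝ | ∃ (A' : Finset ℕ) (a : ℕ → ℝ),
      A'.card ≤ B.card ∧ A' ∈ F ∧ r = ‖y - ∑ n ∈ A', a n • b.e n‖} :=
    ⟨A, ε, hAB, hA, by rw [h2]⟩
  have hbdd : BddBelow {r : ℝ | ∃ (A' : Finset ℕ) (a : ℕ → ℝ),
      A'.card ≤ B.card ∧ A' ∈ F ∧ r = ‖y - ∑ n ∈ A', a n • b.e n‖} :=
    ⟨0, fun r ⟨_, _, _, _, hr⟩ => hr ▸ norm_nonneg _⟩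
  have hsig : b.sigmaF F B.card y ≤ ‖x + ∑ n ∈ B, c n • b.e n‖ :=
    csInf_le hbdd hmem
  calc ‖x + ∑ i ∈ A, ε i • b.e i‖ = ‖y - b.proj B y‖ := by rw [h1]
    _ ≤ C * b.sigmaF F B.card y := hg y B hgs
    _ ≤ C * ‖x + ∑ n ∈ B, c n • b.e n‖ :=
        mul_le_mul_of_nonneg_left hsig (le_trans zero_le_one hC)
end

section
/- If a basis (e_n) is K-F-suppression unconditional and has C-Property (A, F), then (e_n) is KC-F-greedy: for every x ∈ X, every greedy set A of x, every B ∈ F with |B| ≤ |A|, and all scalars (b_n)_{n∈B}, ‖x − P_A(x)‖ ≤ KC‖x − Σ_{n∈B} b_n e_n‖. -/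
section stmt6Aux
variable {X : Type*} [NormedAddCommGroup X] [NormedSpace ℝ X]

private lemma stmt6.seg_bound (v u : X) (a α : ℝ) (h : |a| ≤ α) :
    ‖v + a • u‖ ≤ max ‖v + α • u‖ ‖v - α • u‖ := by
  rcases eq_or_lt_of_le ((abs_nonneg a).trans h) with h0 | h0
  · have ha : a = 0 := abs_eq_zero.mp (le_antisymm (h.trans h0.ge) (abs_nonneg a))
    subst ha
    rw [← h0]
    simp
  · obtain ⟨ha1, ha2⟩ := abs_le.mp h
    set t := (α + a) / (2 * α) with ht
    set s := (α - a) / (2 * α) with hs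
    have hαne : (2 * α) ≠ 0 := by positivity
    have ht0 : 0 ≤ t := div_nonneg (by linarith) (by linarith)
    have hs0 : 0 ≤ s := div_nonneg (by linarith) (by linarith)
    have hts : t + s = 1 := by rw [ht, hs]; field_simp; ring
    have h2 : t * α - s * α = a := by rw [ht, hs]; field_simp; ring
    have key : v + a • u = t • (v + α • u) + s • (v - α • u) := by
      rw [smul_add, smul_sub, smul_smul, smul_smul]
      have h3 : t • v + s • v = v := by rw [← add_smul, hts, one_smul]
      calc v + a • u = (t • v + s • v) + (t * α - s * α) • u := by rw [h3, h2]
        _ = t • v + (t * α) • u + (s • v - (s * α) • u) := by rw [sub_smul]; abel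
    rw [key]
    calc ‖t • (v + α • u) + s • (v - α • u)‖
        ≤ ‖t • (v + α • u)‖ + ‖s • (v - α • u)‖ := norm_add_le _ _
      _ = t * ‖v + α • u‖ + s * ‖v - α • u‖ := by
          rw [norm_smul, norm_smul, Real.norm_of_nonneg ht0, Real.norm_of_nonneg hs0]
      _ ≤ t * max ‖v + α • u‖ ‖v - α • u‖ + s * max ‖v + α • u‖ ‖v - α • u‖ := by
          gcongr
          · exact le_max_left _ _
          · exact le_max_right _ _
      _ = max ‖v + α • u‖ ‖v - α • u‖ := by rw [← add_mul, hts, one_mul]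

private lemma stmt6.sign_bound (e : ℕ → X) (α : ℝ) (a : ℕ → ℝ) :
    ∀ (D : Finset ℕ) (w : X), (∀ n ∈ D, |a n| ≤ α) →
    ∃ ε : ℕ → ℝ, (∀ n ∈ D, |ε n| = 1) ∧
      ‖w + ∑ n ∈ D, a n • e n‖ ≤ ‖w + ∑ n ∈ D, (α * ε n) • e n‖ := by
  intro D
  induction D using Finset.induction_on with
  | empty => exact fun w _ => ⟨fun _ => 1, by simp, by simp⟩
  | @insert m D hm ih =>
    intro w hb
    obtain ⟨ε', hε', hle⟩ := ih (w + a m • e m) (fun n hn => hb n (Finset.mem_insert_of_mem hn))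
    set v := w + ∑ n ∈ D, (α * ε' n) • e n with hv
    have h2 := stmt6.seg_bound v (e m) (a m) α (hb m (Finset.mem_insert_self _ _))
    have hsum : ∀ (g : ℕ → ℝ), ∑ n ∈ insert m D, g n • e n = g m • e m + ∑ n ∈ D, g n • e n :=
      fun g => Finset.sum_insert hm
    rcases max_cases ‖v + α • e m‖ ‖v - α • e m‖ with ⟨hmax, _⟩ | ⟨hmax, _⟩
    · refine ⟨Function.update ε' m 1, ?_, ?_⟩
      · intro n hn
        rcases Finset.mem_insert.mp hn with rfl | hn
        · simp
        · rw [Function.update_of_ne (fun h : _ = m => hm (h ▸ hn))]; exact hε' n hn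
      · have hsum2 : ∑ n ∈ insert m D, (α * Function.update ε' m 1 n) • e n
            = (α * 1) • e m + ∑ n ∈ D, (α * ε' n) • e n := by
          rw [hsum]
          congr 1
          · simp
          · exact Finset.sum_congr rfl fun n hn => by
              rw [Function.update_of_ne (fun h : _ = m => hm (h ▸ hn))]
        rw [hsum, hsum2]
        calc ‖w + (a m • e m + ∑ n ∈ D, a n • e n)‖
            = ‖(w + a m • e m) + ∑ n ∈ D, a n • e n‖ := by rw [add_assoc]
          _ ≤ ‖(w + a m • e m) + ∑ n ∈ D, (α * ε' n) • e n‖ := hle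
          _ = ‖v + a m • e m‖ := by rw [hv]; congr 1; abel
          _ ≤ ‖v + α • e m‖ := h2.trans_eq hmax
          _ = ‖w + ((α * 1) • e m + ∑ n ∈ D, (α * ε' n) • e n)‖ := by
              rw [hv, mul_one]; congr 1; abel
    · refine ⟨Function.update ε' m (-1), ?_, ?_⟩
      · intro n hn
        rcases Finset.mem_insert.mp hn with rfl | hn
        · simp
        · rw [Function.update_of_ne (fun h : _ = m => hm (h ▸ hn))]; exact hε' n hn
      · have hsum2 : ∑ n ∈ insert m D, (α * Function.update ε' m (-1) n) • e n
            = (α * (-1)) • e m + ∑ n ∈ D, (α * ε' n) • e n := by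
          rw [hsum]
          congr 1
          · simp
          · exact Finset.sum_congr rfl fun n hn => by
              rw [Function.update_of_ne (fun h : _ = m => hm (h ▸ hn))]
        rw [hsum, hsum2]
        calc ‖w + (a m • e m + ∑ n ∈ D, a n • e n)‖
            = ‖(w + a m • e m) + ∑ n ∈ D, a n • e n‖ := by rw [add_assoc]
          _ ≤ ‖(w + a m • e m) + ∑ n ∈ D, (α * ε' n) • e n‖ := hle
          _ = ‖v + a m • e m‖ := by rw [hv]; congr 1; abel
          _ ≤ ‖v - α • e m‖ := h2.trans_eq hmax
          _ = ‖w + ((α * (-1)) • e m + ∑ n ∈ D, (α * ε' n) • e n)‖ := by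
              rw [hv]
              have h4 : (α * (-1)) • e m = -(α • e m) := by rw [mul_neg_one, neg_smul]
              rw [h4, sub_eq_add_neg]
              congr 1; abel

private lemma stmt6.coeff_proj (b : GreedyBasis X) (S : Finset ℕ) (x : X) (m : ℕ) :
    b.f m (b.proj S x) = if m ∈ S then b.f m x else 0 := by
  simp only [GreedyBasis.proj, map_sum, map_smul, b.biorth, smul_eq_mul, mul_ite, mul_one,
    mul_zero]
  exact Finset.sum_ite_eq S m _

private lemma stmt6.proj_sub (b : GreedyBasis X) (S : Finset ℕ) (x y : X) :
    b.proj S (x - y) = b.proj S x - b.proj S y := by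
  simp only [GreedyBasis.proj, map_sub, sub_smul, Finset.sum_sub_distrib]

private lemma stmt6.proj_self (b : GreedyBasis X) (B : Finset ℕ) (c : ℕ → ℝ) :
    b.proj B (∑ n ∈ B, c n • b.e n) = ∑ n ∈ B, c n • b.e n := by
  unfold GreedyBasis.proj
  apply Finset.sum_congr rfl
  intro m hm
  congr 1
  simp only [map_sum, map_smul, b.biorth, smul_eq_mul, mul_ite, mul_one, mul_zero]
  rw [Finset.sum_ite_eq B m]
  simp [hm]

private lemma stmt6.proj_union (b : GreedyBasis X) (A D : Finset ℕ) (h : Disjoint A D) (x : X) :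
    b.proj (A ∪ D) x = b.proj A x + b.proj D x := Finset.sum_union h

end stmt6Aux

/-- If a basis is `K`-`F`-suppression unconditional and has `C`-Property (A, F),
then it is `K·C`-`F`-greedy: for every `x`, every greedy set `A` of `x`, every
`B ∈ F` with `|B| ≤ |A|`, and all scalars `(b_n)`,
`‖x − P_A(x)‖ ≤ K·C·‖x − ∑_{n∈B} b_n e_n‖`. -/
theorem stmt6 {X : Type*} [NormedAddCommGroup X] [NormedSpace ℝ X]
    (b : GreedyBasis X) (F : Set (Finset ℕ)) (hF : Hereditary F)
    (K C : ℝ) (hK : 1 ≤ K) (hC : 1 ≤ C)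
    (hu : ∀ (x : X), ∀ A ∈ F, ‖x - b.proj A x‖ ≤ K * ‖x‖)
    (hA : b.PropertyA F C) :
    ∀ (x : X) (A : Finset ℕ), b.IsGreedySet x A →
      ∀ B ∈ F, B.card ≤ A.card → ∀ c : ℕ → ℝ,
        ‖x - b.proj A x‖ ≤ K * C * ‖x - ∑ n ∈ B, c n • b.e n‖ := by
  intro x A hG B hB hcard c
  rcases Finset.eq_empty_or_nonempty A with rfl | hAne
  · have hB0 : B = ∅ := Finset.card_eq_zero.mp (le_antisymm (by simpa using hcard) (Nat.zero_le _))
    subst hB0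
    simp only [GreedyBasis.proj, Finset.sum_empty, sub_zero]
    have h1 : 1 ≤ K * C := by nlinarith
    exact le_mul_of_one_le_left (norm_nonneg x) h1
  · set y := ∑ n ∈ B, c n • b.e n with hy
    set N := A ∪ B with hN
    set w := x - b.proj N x with hw
    set D := B \ A with hD
    set E := A \ B with hE
    -- suppression step
    have step1 : ‖x - b.proj B x‖ ≤ K * ‖x - y‖ := by
      have h1 : x - b.proj B x = (x - y) - b.proj B (x - y) := by
        rw [stmt6.proj_sub, stmt6.proj_self]
        abel
      rw [h1]
      exact hu (x - y) B hB
    -- decompositions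
    have hdisjAD : Disjoint A D := Finset.disjoint_sdiff
    have hdisjBE : Disjoint B E := Finset.disjoint_sdiff
    have hNAD : N = A ∪ D := by rw [hN, hD, Finset.union_sdiff_self_eq_union]
    have hNBE : N = B ∪ E := by rw [hN, hE, Finset.union_sdiff_self_eq_union, Finset.union_comm]
    have dec1 : x - b.proj A x = w + b.proj D x := by
      rw [hw, hNAD, stmt6.proj_union b A D hdisjAD]
      abel
    have dec2 : x - b.proj B x = w + b.proj E x := by
      rw [hw, hNBE, stmt6.proj_union b B E hdisjBE]
      abel
    have hwcoef : ∀ n, b.f n w = if n ∈ N then 0 else b.f n x := by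
      intro n
      rw [hw, map_sub, stmt6.coeff_proj]
      split <;> simp
    have hwN : ∀ n ∈ N, b.f n w = 0 := by
      intro n hn; rw [hwcoef]; simp [hn]
    have hDN : D ⊆ N := by rw [hNAD]; exact Finset.subset_union_right
    have hEN : E ⊆ N := by rw [hNBE]; exact Finset.subset_union_right
    have hDnA : ∀ n ∈ D, n ∉ A := fun n hn => (Finset.mem_sdiff.mp hn).2
    have hEA : ∀ n ∈ E, n ∈ A := fun n hn => (Finset.mem_sdiff.mp hn).1
    have hNA : ∀ n, n ∉ N → n ∉ A := fun n hn hna => hn (Finset.mem_union_left _ hna)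
    -- cardinality
    have hcardDE : D.card ≤ E.card := by
      have h1 := Finset.card_sdiff_add_card_inter B A
      have h2 := Finset.card_sdiff_add_card_inter A B
      have h3 : (B ∩ A).card = (A ∩ B).card := by rw [Finset.inter_comm]
      rw [hD, hE]
      omega
    have hdisjDE : Disjoint D E := by
      rw [Finset.disjoint_left]
      intro n hn hne
      exact hDnA n hn (hEA n hne)
    -- key step
    have key : ‖x - b.proj A x‖ ≤ C * ‖x - b.proj B x‖ := by
      set α := A.inf' hAne (fun n => |b.f n x|) with hα
      obtain ⟨n0, hn0A, hn0⟩ := Finset.exists_mem_eq_inf' hAne (fun n => |b.f n x|)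
      rw [← hα] at hn0
      have hα0 : 0 ≤ α := by rw [hn0]; exact abs_nonneg _
      have hout : ∀ m, m ∉ A → |b.f m x| ≤ α := fun m hm => by
        rw [hn0]; exact hG n0 hn0A m hm
      have hin : ∀ n ∈ A, α ≤ |b.f n x| := fun n hn => Finset.inf'_le _ hn
      rcases hα0.eq_or_lt with hαz | hαpos
      · -- α = 0 case
        have hout0 : ∀ m, m ∉ A → b.f m x = 0 := fun m hm =>
          abs_eq_zero.mp (le_antisymm (by rw [hαz]; exact hout m hm) (abs_nonneg _))
        have hprojD : b.proj D x = 0 := by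
          apply Finset.sum_eq_zero
          intro n hn
          rw [hout0 n (hDnA n hn), zero_smul]
        have hwall : ∀ n, b.f n w = 0 := by
          intro n
          rw [hwcoef]
          split
          · rfl
          · exact hout0 n (hNA n (by assumption))
        set E'' := E.filter (fun n => b.f n x ≠ 0) with hE''
        have hprojE : b.proj E x = b.proj E'' x := by
          rw [hE'']
          unfold GreedyBasis.proj
          rw [Finset.sum_filter_of_ne]
          intro n _ hne h0
          exact hne (by rw [h0, zero_smul])
        rcases E''.eq_empty_or_nonempty with hE''e | hE''ne
        · have : b.proj E x = 0 := by
            rw [hprojE, hE''e]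
            simp [GreedyBasis.proj]
          rw [dec1, dec2, hprojD, this, add_zero]
          exact le_mul_of_one_le_left (norm_nonneg _) hC
        · set γ := E''.inf' hE''ne (fun n => |b.f n x|) with hγ
          obtain ⟨n1, hn1, hn1eq⟩ := Finset.exists_mem_eq_inf' hE''ne (fun n => |b.f n x|)
          rw [← hγ] at hn1eq
          have hn1ne : b.f n1 x ≠ 0 := (Finset.mem_filter.mp hn1).2
          have hγpos : 0 < γ := by rw [hn1eq]; exact abs_pos.mpr hn1ne
          have happ := hA (γ⁻¹ • w) ∅ E'' (fun _ => 1) (fun n => γ⁻¹ * b.f n x)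
            (by intro n; rw [map_smul, smul_eq_mul, hwall, mul_zero]; simp)
            (hF B hB ∅ (Finset.empty_subset B))
            (by simp)
            (Finset.disjoint_empty_left _)
            (by simp)
            (by intro n _; rw [map_smul, smul_eq_mul, hwall, mul_zero])
            (by simp)
            (by
              intro n hn
              have h1 : γ ≤ |b.f n x| := Finset.inf'_le _ hn
              rw [abs_mul, abs_inv, abs_of_pos hγpos]
              calc (1:ℝ) = γ⁻¹ * γ := (inv_mul_cancel₀ hγpos.ne').symm
                _ ≤ γ⁻¹ * |b.f n x| := by
                    apply mul_le_mul_of_nonneg_left h1 (inv_nonneg.mpr hγpos.le))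
          simp only [Finset.sum_empty, add_zero] at happ
          have heq : γ • (γ⁻¹ • w + ∑ n ∈ E'', (γ⁻¹ * b.f n x) • b.e n)
              = w + b.proj E'' x := by
            rw [smul_add, smul_smul, mul_inv_cancel₀ hγpos.ne', one_smul, Finset.smul_sum]
            congr 1
            apply Finset.sum_congr rfl
            intro n _
            rw [smul_smul, ← mul_assoc, mul_inv_cancel₀ hγpos.ne', one_mul]
          have hnorm1 : ‖w‖ = γ * ‖γ⁻¹ • w‖ := by
            rw [norm_smul, Real.norm_eq_abs, abs_inv, abs_of_pos hγpos]
            field_simp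
          calc ‖x - b.proj A x‖ = ‖w‖ := by rw [dec1, hprojD, add_zero]
            _ = γ * ‖γ⁻¹ • w‖ := hnorm1
            _ ≤ γ * (C * ‖γ⁻¹ • w + ∑ n ∈ E'', (γ⁻¹ * b.f n x) • b.e n‖) := by
                apply mul_le_mul_of_nonneg_left happ hγpos.le
            _ = C * ‖γ • (γ⁻¹ • w + ∑ n ∈ E'', (γ⁻¹ * b.f n x) • b.e n)‖ := by
                rw [norm_smul, Real.norm_eq_abs, abs_of_pos hγpos]; ring
            _ = C * ‖w + b.proj E'' x‖ := by rw [heq]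
            _ = C * ‖x - b.proj B x‖ := by rw [dec2, hprojE]
      · -- α > 0 case
        obtain ⟨ε, hε, hconv⟩ := stmt6.sign_bound b.e α (fun n => b.f n x) D w
          (fun n hn => hout n (hDnA n hn))
        have happ := hA (α⁻¹ • w) D E ε (fun n => α⁻¹ * b.f n x)
          (by
            intro n
            rw [map_smul, smul_eq_mul, abs_mul, abs_inv, abs_of_pos hαpos, hwcoef]
            split
            · simp
            · calc α⁻¹ * |b.f n x| ≤ α⁻¹ * α := by
                    apply mul_le_mul_of_nonneg_left (hout n (hNA n (by assumption)))
                      (inv_nonneg.mpr hαpos.le)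
                _ = 1 := inv_mul_cancel₀ hαpos.ne')
          (hF B hB D (by rw [hD]; exact Finset.sdiff_subset))
          hcardDE
          hdisjDE
          (by
            intro n hn
            rw [map_smul, smul_eq_mul, hwN n (hDN hn), mul_zero])
          (by
            intro n hn
            rw [map_smul, smul_eq_mul, hwN n (hEN hn), mul_zero])
          hε
          (by
            intro n hn
            have h1 : α ≤ |b.f n x| := hin n (hEA n hn)
            rw [abs_mul, abs_inv, abs_of_pos hαpos]
            calc (1:ℝ) = α⁻¹ * α := (inv_mul_cancel₀ hαpos.ne').symm
              _ ≤ α⁻¹ * |b.f n x| := by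
                  apply mul_le_mul_of_nonneg_left h1 (inv_nonneg.mpr hαpos.le))
        have heqD : α • (α⁻¹ • w + ∑ i ∈ D, ε i • b.e i) = w + ∑ n ∈ D, (α * ε n) • b.e n := by
          rw [smul_add, smul_smul, mul_inv_cancel₀ hαpos.ne', one_smul, Finset.smul_sum]
          congr 1
          exact Finset.sum_congr rfl fun n _ => smul_smul _ _ _
        have heqE : α • (α⁻¹ • w + ∑ n ∈ E, (α⁻¹ * b.f n x) • b.e n) = w + b.proj E x := by
          rw [smul_add, smul_smul, mul_inv_cancel₀ hαpos.ne', one_smul, Finset.smul_sum]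
          congr 1
          apply Finset.sum_congr rfl
          intro n _
          rw [smul_smul, ← mul_assoc, mul_inv_cancel₀ hαpos.ne', one_mul]
        calc ‖x - b.proj A x‖ = ‖w + b.proj D x‖ := by rw [dec1]
          _ ≤ ‖w + ∑ n ∈ D, (α * ε n) • b.e n‖ := hconv
          _ = ‖α • (α⁻¹ • w + ∑ i ∈ D, ε i • b.e i)‖ := by rw [heqD]
          _ = α * ‖α⁻¹ • w + ∑ i ∈ D, ε i • b.e i‖ := by
              rw [norm_smul, Real.norm_eq_abs, abs_of_pos hαpos]
          _ ≤ α * (C * ‖α⁻¹ • w + ∑ n ∈ E, (α⁻¹ * b.f n x) • b.e n‖) := by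
              apply mul_le_mul_of_nonneg_left happ hαpos.le
          _ = C * ‖α • (α⁻¹ • w + ∑ n ∈ E, (α⁻¹ * b.f n x) • b.e n)‖ := by
              rw [norm_smul, Real.norm_eq_abs, abs_of_pos hαpos]; ring
          _ = C * ‖w + b.proj E x‖ := by rw [heqE]
          _ = C * ‖x - b.proj B x‖ := by rw [dec2]
    calc ‖x - b.proj A x‖ ≤ C * ‖x - b.proj B x‖ := key
      _ ≤ C * (K * ‖x - y‖) := by
          apply mul_le_mul_of_nonneg_left step1 (by linarith)
      _ = K * C * ‖x - y‖ := by ring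
end

section
/- A basis (e_n) has C-Property (A, F) if and only if ‖x‖ ≤ C‖x − P_A(x) + Σ_{n∈B} b_n e_n‖ for all x ∈ X with ‖x‖_∞ ≤ 1, all finite sets A, B with |A| ≤ |B|, A ∈ F, B ∩ (A ∪ supp(x)) = ∅, and all scalars |b_n| ≥ 1. -/
section Aux

variable {X : Type*} [NormedAddCommGroup X] [NormedSpace ℝ X]

lemma GreedyBasis.coef_sum (b : GreedyBasis X) (A : Finset ℕ) (a : ℕ → ℝ) (n : ℕ) :
    b.f n (∑ i ∈ A, a i • b.e i) = if n ∈ A then a n else 0 := by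
  rw [map_sum]
  simp only [map_smul, b.biorth, smul_eq_mul, mul_ite, mul_one, mul_zero,
    Finset.sum_ite_eq]

lemma GreedyBasis.convex_bound (b : GreedyBasis X) (A : Finset ℕ) (a : ℕ → ℝ) (D : ℝ) :
    ∀ (y : X), (∀ i ∈ A, |a i| ≤ 1) →
      (∀ ε : ℕ → ℝ, (∀ i ∈ A, |ε i| = 1) → ‖y + ∑ i ∈ A, ε i • b.e i‖ ≤ D) →
      ‖y + ∑ i ∈ A, a i • b.e i‖ ≤ D := by
  classical
  induction A using Finset.induction_on with
  | empty =>
      intro y _ hD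
      simpa using hD (fun _ => 1) (by simp)
  | @insert j s hj ih =>
      intro y ha hD
      have haj : |a j| ≤ 1 := ha j (Finset.mem_insert_self j s)
      obtain ⟨h1, h2⟩ := abs_le.1 haj
      set t : ℝ := (1 + a j) / 2 with ht
      have ht0 : 0 ≤ t := by simp only [ht]; linarith
      have ht1 : t ≤ 1 := by simp only [ht]; linarith
      have key : y + ∑ i ∈ insert j s, a i • b.e i
          = t • (y + b.e j + ∑ i ∈ s, a i • b.e i)
            + (1 - t) • (y - b.e j + ∑ i ∈ s, a i • b.e i) := by
        rw [Finset.sum_insert hj, ht]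
        module
      have hside : ∀ σ : ℝ, |σ| = 1 →
          ‖y + σ • b.e j + ∑ i ∈ s, a i • b.e i‖ ≤ D := by
        intro σ hσ
        have := ih (y + σ • b.e j) (fun i hi => ha i (Finset.mem_insert_of_mem hi))
          (fun ε hε => by
            have hD' := hD (Function.update ε j σ) (fun i hi => by
              rcases Finset.mem_insert.1 hi with rfl | hi
              · simpa using hσ
              · rw [Function.update_of_ne (ne_of_mem_of_not_mem hi hj)]
                exact hε i hi)
            rw [Finset.sum_insert hj, Function.update_self] at hD'
            have hsum : ∑ i ∈ s, Function.update ε j σ i • b.e i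
                = ∑ i ∈ s, ε i • b.e i :=
              Finset.sum_congr rfl (fun i hi => by
                rw [Function.update_of_ne (ne_of_mem_of_not_mem hi hj)])
            rw [hsum] at hD'
            calc ‖y + σ • b.e j + ∑ i ∈ s, ε i • b.e i‖
                = ‖y + (σ • b.e j + ∑ i ∈ s, ε i • b.e i)‖ := by rw [add_assoc]
              _ ≤ D := hD')
        calc ‖y + σ • b.e j + ∑ i ∈ s, a i • b.e i‖
            = ‖y + σ • b.e j + ∑ i ∈ s, a i • b.e i‖ := rfl
          _ ≤ D := this
      have hu : ‖y + b.e j + ∑ i ∈ s, a i • b.e i‖ ≤ D := by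
        have := hside 1 (by norm_num)
        simpa using this
      have hv : ‖y - b.e j + ∑ i ∈ s, a i • b.e i‖ ≤ D := by
        have := hside (-1) (by norm_num)
        have heq : y + (-1 : ℝ) • b.e j = y - b.e j := by module
        rwa [heq] at this
      have hDnn : 0 ≤ D := le_trans (norm_nonneg _) hu
      calc ‖y + ∑ i ∈ insert j s, a i • b.e i‖
          = ‖t • (y + b.e j + ∑ i ∈ s, a i • b.e i)
              + (1 - t) • (y - b.e j + ∑ i ∈ s, a i • b.e i)‖ := by rw [key]
        _ ≤ t * ‖y + b.e j + ∑ i ∈ s, a i • b.e i‖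
              + (1 - t) * ‖y - b.e j + ∑ i ∈ s, a i • b.e i‖ := by
            refine le_trans (norm_add_le _ _) ?_
            rw [norm_smul, norm_smul, Real.norm_eq_abs, Real.norm_eq_abs,
              abs_of_nonneg ht0, abs_of_nonneg (by linarith : (0:ℝ) ≤ 1 - t)]
        _ ≤ D := by
            have h3 := mul_le_mul_of_nonneg_left hu ht0
            have h4 := mul_le_mul_of_nonneg_left hv (by linarith : (0:ℝ) ≤ 1 - t)
            linarith

end Aux

/-- A basis has `C`-Property (A, F) iff
`‖x‖ ≤ C ‖x − P_A(x) + ∑_{n∈B} b_n e_n‖` for all `x` with `‖x‖_∞ ≤ 1`,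
all `A ∈ F`, `|A| ≤ |B|`, `B ∩ (A ∪ supp x) = ∅`, and all `|b_n| ≥ 1`. -/
theorem stmt7 {X : Type*} [NormedAddCommGroup X] [NormedSpace ℝ X]
    (b : GreedyBasis X) (F : Set (Finset ℕ)) (hF : Hereditary F) (C : ℝ) (hC : 1 ≤ C) :
    b.PropertyA F C ↔
      ∀ (x : X) (A B : Finset ℕ) (c : ℕ → ℝ),
        (∀ n, |b.f n x| ≤ 1) → A ∈ F → A.card ≤ B.card →
        (∀ n ∈ B, n ∉ A ∧ b.f n x = 0) →
        (∀ n ∈ B, 1 ≤ |c n|) →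
        ‖x‖ ≤ C * ‖x - b.proj A x + ∑ n ∈ B, c n • b.e n‖ := by
  classical
  constructor
  · intro hPA x A B c h1 hA hcard hB hc
    set y : X := x - b.proj A x with hy
    have hyc : ∀ n, b.f n y = if n ∈ A then 0 else b.f n x := by
      intro n
      rw [hy, map_sub, GreedyBasis.proj, b.coef_sum]
      by_cases hn : n ∈ A <;> simp [hn]
    have hx : x = y + ∑ i ∈ A, b.f i x • b.e i := by
      rw [hy]; rw [GreedyBasis.proj]; abel
    rw [show ‖x‖ = ‖y + ∑ i ∈ A, b.f i x • b.e i‖ by rw [← hx]]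
    refine b.convex_bound A (fun i => b.f i x) _ y (fun i _ => h1 i) ?_
    intro ε hε
    refine hPA y A B ε c ?_ hA hcard ?_ ?_ ?_ hε hc
    · intro n; rw [hyc n]; by_cases hn : n ∈ A <;> simp [hn, h1 n]
    · exact Finset.disjoint_right.mpr (fun n hn => (hB n hn).1)
    · intro n hn; rw [hyc n]; simp [hn]
    · intro n hn; rw [hyc n]; simp [(hB n hn).1, (hB n hn).2]
  · intro h x A B ε c h1 hA hcard hdisj hxA hxB hε hc
    set x' : X := x + ∑ i ∈ A, ε i • b.e i with hx'
    have hcoef : ∀ n, b.f n x' = b.f n x + (if n ∈ A then ε n else 0) := by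
      intro n; rw [hx', map_add, b.coef_sum]
    have hproj : b.proj A x' = ∑ i ∈ A, ε i • b.e i := by
      rw [GreedyBasis.proj]
      refine Finset.sum_congr rfl (fun i hi => ?_)
      rw [hcoef i, hxA i hi, if_pos hi, zero_add]
    have hsub : x' - b.proj A x' = x := by rw [hproj, hx']; abel
    have := h x' A B c (fun n => by
        rw [hcoef n]
        by_cases hn : n ∈ A
        · rw [if_pos hn, hxA n hn, zero_add]
          exact le_of_eq (hε n hn)
        · rw [if_neg hn, add_zero]; exact h1 n)
      hA hcard (fun n hn => by
        have hnA : n ∉ A := Finset.disjoint_right.mp hdisj hn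
        refine ⟨hnA, ?_⟩
        rw [hcoef n, if_neg hnA, hxB n hn, add_zero]) hc
    rwa [hsub] at this
end

section
/- Suppose (e_n) is a C_ℓ-suppression quasi-greedy, C_w-quasi-greedy basis that is C_d-F-disjoint democratic. Then (e_n) has Property (A, F) with constant 8·C_w·C_ℓ³·C_d: for all x with ‖x‖_∞ ≤ 1, A ∈ F, |A| ≤ |B|, A, B, supp(x) pairwise disjoint, signs (ε_i), and |b_n| ≥ 1, ‖x + Σ_{i∈A} ε_i e_i‖ ≤ 8 C_w C_ℓ³ C_d ‖x + Σ_{n∈B} b_n e_n‖. -/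
section Aux
namespace GreedyBasis
variable {X : Type*} [NormedAddCommGroup X] [NormedSpace ℝ X] (b : GreedyBasis X)

lemma f_sum_coeff (i : ℕ) (S : Finset ℕ) (a : ℕ → ℝ) :
    b.f i (∑ n ∈ S, a n • b.e n) = if i ∈ S then a i else 0 := by
  rw [map_sum]
  have h : ∀ n ∈ S, b.f i (a n • b.e n) = if i = n then a n else 0 := by
    intro n _
    rw [map_smul, b.biorth]
    by_cases h : i = n <;> simp [h]
  rw [Finset.sum_congr rfl h, Finset.sum_ite_eq]

lemma trunc_bound (Cl : ℝ) (hCl : 1 ≤ Cl)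
    (hsqg : ∀ (x : X) (A : Finset ℕ), b.IsGreedySet x A → ‖x - b.proj A x‖ ≤ Cl * ‖x‖) :
    ∀ (k : ℕ) (B : Finset ℕ), B.card ≤ k → ∀ (y : X) (s : ℝ), 0 < s →
      (∀ n ∈ B, s ≤ |b.f n y|) → (∀ m, m ∉ B → |b.f m y| ≤ s) →
      ‖y - b.proj B y + ∑ n ∈ B, (s * Real.sign (b.f n y)) • b.e n‖ ≤ Cl * ‖y‖ := by
  intro k
  induction k with
  | zero =>
    intro B hB y s _ _ _
    have hBe : B = ∅ := Finset.card_eq_zero.mp (Nat.le_antisymm hB (Nat.zero_le _))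
    subst hBe
    simp only [proj, Finset.sum_empty, sub_zero, add_zero]
    calc ‖y‖ = 1 * ‖y‖ := (one_mul _).symm
    _ ≤ Cl * ‖y‖ := mul_le_mul_of_nonneg_right hCl (norm_nonneg _)
  | succ k ih =>
    intro B hB y s hs hlow hup
    rcases B.eq_empty_or_nonempty with hBe | hne
    · subst hBe
      simp only [proj, Finset.sum_empty, sub_zero, add_zero]
      calc ‖y‖ = 1 * ‖y‖ := (one_mul _).symm
      _ ≤ Cl * ‖y‖ := mul_le_mul_of_nonneg_right hCl (norm_nonneg _)
    obtain ⟨n₀, hn₀, hmin⟩ := B.exists_min_image (fun n => |b.f n y|) hne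
    set t : ℝ := |b.f n₀ y| with ht_def
    have hst : s ≤ t := hlow n₀ hn₀
    have ht : 0 < t := lt_of_lt_of_le hs hst
    set B' := B.erase n₀ with hB'
    have hcard' : B'.card ≤ k := by
      have h1 : B'.card = B.card - 1 := by rw [hB']; exact Finset.card_erase_of_mem hn₀
      have h2 := Finset.card_pos.mpr hne
      omega
    have hIH : ‖y - b.proj B' y + ∑ n ∈ B', (t * Real.sign (b.f n y)) • b.e n‖ ≤ Cl * ‖y‖ := by
      refine ih B' hcard' y t ht ?_ ?_
      · intro n hn; exact hmin n (Finset.mem_of_mem_erase hn)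
      · intro m hm
        by_cases hmB : m = n₀
        · subst hmB; exact le_of_eq rfl
        · exact le_trans (hup m (fun h => hm (Finset.mem_erase.mpr ⟨hmB, h⟩))) hst
    have hgB : b.IsGreedySet y B := by
      intro n hn m hm
      exact le_trans (hup m hm) (hlow n hn)
    have hW : ‖y - b.proj B y‖ ≤ Cl * ‖y‖ := hsqg y B hgB
    have hproj_split : b.proj B y = b.f n₀ y • b.e n₀ + b.proj B' y := by
      rw [proj, proj, ← Finset.add_sum_erase _ _ hn₀]
    have hsum_split : ∑ n ∈ B, (s * Real.sign (b.f n y)) • b.e n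
        = (s * Real.sign (b.f n₀ y)) • b.e n₀ + ∑ n ∈ B', (s * Real.sign (b.f n y)) • b.e n := by
      rw [← Finset.add_sum_erase _ _ hn₀]
    have hscale : ∑ n ∈ B', (s * Real.sign (b.f n y)) • b.e n
        = (s / t) • ∑ n ∈ B', (t * Real.sign (b.f n y)) • b.e n := by
      rw [Finset.smul_sum]
      refine Finset.sum_congr rfl ?_
      intro n _
      rw [smul_smul]
      congr 1
      field_simp
    have hc₀ : b.f n₀ y ≠ 0 := by
      intro h
      rw [ht_def, h, abs_zero] at ht
      exact lt_irrefl 0 ht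
    have hsgn : Real.sign (b.f n₀ y) = b.f n₀ y / t := by
      rcases lt_or_gt_of_ne hc₀ with h | h
      · rw [Real.sign_of_neg h, ht_def, abs_of_neg h]
        field_simp
      · rw [Real.sign_of_pos h, ht_def, abs_of_pos h]
        rw [div_self hc₀]
    have key : y - b.proj B y + ∑ n ∈ B, (s * Real.sign (b.f n y)) • b.e n
        = (s / t) • (y - b.proj B' y + ∑ n ∈ B', (t * Real.sign (b.f n y)) • b.e n)
          + (1 - s / t) • (y - b.proj B y) := by
      rw [hsum_split, hscale, hsgn, hproj_split]
      have htne : t ≠ 0 := ne_of_gt ht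
      match_scalars <;> field_simp <;> ring
    rw [key]
    have hl0 : 0 ≤ s / t := le_of_lt (div_pos hs ht)
    have hl1 : s / t ≤ 1 := (div_le_one ht).mpr hst
    calc ‖(s / t) • (y - b.proj B' y + ∑ n ∈ B', (t * Real.sign (b.f n y)) • b.e n)
          + (1 - s / t) • (y - b.proj B y)‖
        ≤ ‖(s / t) • (y - b.proj B' y + ∑ n ∈ B', (t * Real.sign (b.f n y)) • b.e n)‖
          + ‖(1 - s / t) • (y - b.proj B y)‖ := norm_add_le _ _
      _ = (s / t) * ‖y - b.proj B' y + ∑ n ∈ B', (t * Real.sign (b.f n y)) • b.e n‖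
          + (1 - s / t) * ‖y - b.proj B y‖ := by
          rw [norm_smul, norm_smul, Real.norm_of_nonneg hl0, Real.norm_of_nonneg (by linarith)]
      _ ≤ (s / t) * (Cl * ‖y‖) + (1 - s / t) * (Cl * ‖y‖) := by
          refine add_le_add (mul_le_mul_of_nonneg_left hIH hl0)
            (mul_le_mul_of_nonneg_left hW (by linarith))
      _ = Cl * ‖y‖ := by ring

lemma supp_filter (Cl : ℝ)
    (hsqg : ∀ (x : X) (A : Finset ℕ), b.IsGreedySet x A → ‖x - b.proj A x‖ ≤ Cl * ‖x‖)
    (S : Finset ℕ) (σ : ℕ → ℝ) (hσ : ∀ n ∈ S, |σ n| = 1) (p : ℕ → Prop) [DecidablePred p] :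
    ‖∑ n ∈ S.filter p, σ n • b.e n‖ ≤ Cl * ‖∑ n ∈ S, σ n • b.e n‖ := by
  set z := ∑ n ∈ S, σ n • b.e n with hz
  set T := S.filter (fun n => ¬ p n) with hT
  have hTS : T ⊆ S := Finset.filter_subset _ _
  have hfz : ∀ i, b.f i z = if i ∈ S then σ i else 0 := fun i => b.f_sum_coeff i S σ
  have hg : b.IsGreedySet z T := by
    intro n hn m hm
    rw [hfz, hfz, if_pos (hTS hn), hσ n (hTS hn)]
    by_cases hmS : m ∈ S
    · rw [if_pos hmS, hσ m hmS]
    · rw [if_neg hmS, abs_zero]; norm_num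
  have hsub : z - b.proj T z = ∑ n ∈ S.filter p, σ n • b.e n := by
    have hproj : b.proj T z = ∑ n ∈ T, σ n • b.e n := by
      refine Finset.sum_congr rfl ?_
      intro n hn
      rw [hfz, if_pos (hTS hn)]
    rw [hproj, hz, sub_eq_iff_eq_add]
    rw [← Finset.sum_filter_add_sum_filter_not S p (fun n => σ n • b.e n)]
  rw [← hsub]
  exact hsqg z T hg

lemma flipA (Cl : ℝ)
    (hsqg : ∀ (x : X) (A : Finset ℕ), b.IsGreedySet x A → ‖x - b.proj A x‖ ≤ Cl * ‖x‖)
    (S : Finset ℕ) (ε : ℕ → ℝ) (hε : ∀ n ∈ S, |ε n| = 1) :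
    ‖∑ n ∈ S, ε n • b.e n‖ ≤ 2 * Cl * ‖∑ n ∈ S, b.e n‖ := by
  classical
  set p := fun n => ε n = 1 with hp
  have hone : ∀ n ∈ S, |(fun _ => (1:ℝ)) n| = 1 := by intro n _; simp
  have h1 := b.supp_filter Cl hsqg S (fun _ => (1:ℝ)) hone p
  have h2 := b.supp_filter Cl hsqg S (fun _ => (1:ℝ)) hone (fun n => ¬ p n)
  simp only [one_smul] at h1 h2
  have hsplit : ∑ n ∈ S, ε n • b.e n
      = ∑ n ∈ S.filter p, b.e n - ∑ n ∈ S.filter (fun n => ¬ p n), b.e n := by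
    rw [← Finset.sum_filter_add_sum_filter_not S p (fun n => ε n • b.e n)]
    have e1 : ∑ n ∈ S.filter p, ε n • b.e n = ∑ n ∈ S.filter p, b.e n := by
      refine Finset.sum_congr rfl ?_
      intro n hn
      rw [(Finset.mem_filter.mp hn).2, one_smul]
    have e2 : ∑ n ∈ S.filter (fun n => ¬ p n), ε n • b.e n
        = -∑ n ∈ S.filter (fun n => ¬ p n), b.e n := by
      rw [← Finset.sum_neg_distrib]
      refine Finset.sum_congr rfl ?_
      intro n hn
      obtain ⟨hnS, hnp⟩ := Finset.mem_filter.mp hn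
      rcases abs_eq (by norm_num : (0:ℝ) ≤ 1) |>.mp (hε n hnS) with h | h
      · exact absurd h hnp
      · rw [h, neg_one_smul]
    rw [e1, e2]
    abel
  rw [hsplit]
  calc ‖∑ n ∈ S.filter p, b.e n - ∑ n ∈ S.filter (fun n => ¬ p n), b.e n‖
      ≤ ‖∑ n ∈ S.filter p, b.e n‖ + ‖∑ n ∈ S.filter (fun n => ¬ p n), b.e n‖ := norm_sub_le _ _
    _ ≤ Cl * ‖∑ n ∈ S, b.e n‖ + Cl * ‖∑ n ∈ S, b.e n‖ := add_le_add h1 h2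
    _ = 2 * Cl * ‖∑ n ∈ S, b.e n‖ := by ring

lemma flipB (Cl : ℝ)
    (hsqg : ∀ (x : X) (A : Finset ℕ), b.IsGreedySet x A → ‖x - b.proj A x‖ ≤ Cl * ‖x‖)
    (S : Finset ℕ) (σ : ℕ → ℝ) (hσ : ∀ n ∈ S, |σ n| = 1) :
    ‖∑ n ∈ S, b.e n‖ ≤ 2 * Cl * ‖∑ n ∈ S, σ n • b.e n‖ := by
  classical
  set p := fun n => σ n = 1 with hp
  have h1 := b.supp_filter Cl hsqg S σ hσ p
  have h2 := b.supp_filter Cl hsqg S σ hσ (fun n => ¬ p n)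
  have e1 : ∑ n ∈ S.filter p, σ n • b.e n = ∑ n ∈ S.filter p, b.e n := by
    refine Finset.sum_congr rfl ?_
    intro n hn
    rw [(Finset.mem_filter.mp hn).2, one_smul]
  have e2 : ∑ n ∈ S.filter (fun n => ¬ p n), σ n • b.e n
      = -∑ n ∈ S.filter (fun n => ¬ p n), b.e n := by
    rw [← Finset.sum_neg_distrib]
    refine Finset.sum_congr rfl ?_
    intro n hn
    obtain ⟨hnS, hnp⟩ := Finset.mem_filter.mp hn
    rcases abs_eq (by norm_num : (0:ℝ) ≤ 1) |>.mp (hσ n hnS) with h | h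
    · exact absurd h hnp
    · rw [h, neg_one_smul]
  rw [e1] at h1
  rw [e2, norm_neg] at h2
  have hsplit : ∑ n ∈ S, b.e n
      = ∑ n ∈ S.filter p, b.e n + ∑ n ∈ S.filter (fun n => ¬ p n), b.e n :=
    (Finset.sum_filter_add_sum_filter_not S p _).symm
  rw [hsplit]
  calc ‖∑ n ∈ S.filter p, b.e n + ∑ n ∈ S.filter (fun n => ¬ p n), b.e n‖
      ≤ ‖∑ n ∈ S.filter p, b.e n‖ + ‖∑ n ∈ S.filter (fun n => ¬ p n), b.e n‖ := norm_add_le _ _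
    _ ≤ Cl * ‖∑ n ∈ S, σ n • b.e n‖ + Cl * ‖∑ n ∈ S, σ n • b.e n‖ := add_le_add h1 h2
    _ = 2 * Cl * ‖∑ n ∈ S, σ n • b.e n‖ := by ring

end GreedyBasis
end Aux

/-- A `C_ℓ`-suppression quasi-greedy, `C_w`-quasi-greedy, `C_d`-`F`-disjoint
democratic basis has Property (A, F) with constant `8 C_w C_ℓ³ C_d`. -/
theorem stmt9 {X : Type*} [NormedAddCommGroup X] [NormedSpace ℝ X]
    (b : GreedyBasis X) (F : Set (Finset ℕ)) (hF : Hereditary F)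
    (Cl Cw Cd : ℝ) (hCl : 1 ≤ Cl) (hCw : 1 ≤ Cw) (hCd : 1 ≤ Cd)
    (hqg : ∀ (x : X) (A : Finset ℕ), b.IsGreedySet x A → ‖b.proj A x‖ ≤ Cw * ‖x‖)
    (hsqg : ∀ (x : X) (A : Finset ℕ), b.IsGreedySet x A → ‖x - b.proj A x‖ ≤ Cl * ‖x‖)
    (hdem : ∀ A ∈ F, ∀ B : Finset ℕ, A.card ≤ B.card → Disjoint A B →
      ‖∑ i ∈ A, b.e i‖ ≤ Cd * ‖∑ i ∈ B, b.e i‖) :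
    b.PropertyA F (8 * Cw * Cl ^ 3 * Cd) := by
  intro x A B ε c hx hAF hcard hdisj hxA hxB hε hc
  classical
  set y := x + ∑ n ∈ B, c n • b.e n with hy
  have hfy : ∀ i, b.f i y = b.f i x + (if i ∈ B then c i else 0) := by
    intro i; rw [hy, map_add, b.f_sum_coeff]
  have hfyB : ∀ n ∈ B, b.f n y = c n := fun n hn => by
    rw [hfy, hxB n hn, if_pos hn, zero_add]
  have hfyO : ∀ m, m ∉ B → b.f m y = b.f m x := fun m hm => by
    rw [hfy, if_neg hm, add_zero]
  have hcne : ∀ n ∈ B, c n ≠ 0 := fun n hn h => by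
    have := hc n hn; rw [h, abs_zero] at this; linarith
  have hprojB : b.proj B y = ∑ n ∈ B, c n • b.e n :=
    Finset.sum_congr rfl (fun n hn => by rw [hfyB n hn])
  have hxy : y - b.proj B y = x := by rw [hprojB, hy]; abel
  -- step 1: ‖x‖ ≤ Cl ‖y‖
  have hgBy : b.IsGreedySet y B := by
    intro n hn m hm
    rw [hfyB n hn, hfyO m hm]
    exact (hx m).trans (hc n hn)
  have h_x : ‖x‖ ≤ Cl * ‖y‖ := by
    have := hsqg y B hgBy
    rwa [hxy] at this
  -- step 2: truncation
  have htr := b.trunc_bound Cl hCl hsqg B.card B le_rfl y 1 one_pos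
    (fun n hn => by rw [hfyB n hn]; exact hc n hn)
    (fun m hm => by rw [hfyO m hm]; exact hx m)
  have hsum_eq : ∑ n ∈ B, ((1:ℝ) * Real.sign (b.f n y)) • b.e n
      = ∑ n ∈ B, Real.sign (c n) • b.e n :=
    Finset.sum_congr rfl (fun n hn => by rw [one_mul, hfyB n hn])
  rw [hxy, hsum_eq] at htr
  set u := x + ∑ n ∈ B, Real.sign (c n) • b.e n with hu
  -- step 3: quasi-greedy projection
  have hsgn1 : ∀ n ∈ B, |Real.sign (c n)| = 1 := fun n hn => by
    rcases Real.sign_apply_eq_of_ne_zero (c n) (hcne n hn) with h | h <;> rw [h] <;> norm_num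
  have hfu : ∀ i, b.f i u = b.f i x + (if i ∈ B then Real.sign (c i) else 0) := by
    intro i; rw [hu, map_add, b.f_sum_coeff]
  have hgBu : b.IsGreedySet u B := by
    intro n hn m hm
    rw [hfu, hfu, hxB n hn, if_pos hn, zero_add, if_neg hm, add_zero, hsgn1 n hn]
    exact hx m
  have hproju : b.proj B u = ∑ n ∈ B, Real.sign (c n) • b.e n :=
    Finset.sum_congr rfl (fun n hn => by rw [hfu, hxB n hn, if_pos hn, zero_add])
  have h3 : ‖∑ n ∈ B, Real.sign (c n) • b.e n‖ ≤ Cw * ‖u‖ := by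
    have := hqg u B hgBu
    rwa [hproju] at this
  -- step 4 and 5 and 6
  have h4 : ‖∑ n ∈ B, b.e n‖ ≤ 2 * Cl * ‖∑ n ∈ B, Real.sign (c n) • b.e n‖ :=
    b.flipB Cl hsqg B _ hsgn1
  have h5 : ‖∑ i ∈ A, b.e i‖ ≤ Cd * ‖∑ i ∈ B, b.e i‖ := hdem A hAF B hcard hdisj
  have h6 : ‖∑ i ∈ A, ε i • b.e i‖ ≤ 2 * Cl * ‖∑ i ∈ A, b.e i‖ :=
    b.flipA Cl hsqg A ε hε
  -- combine
  have hCl0 : (0:ℝ) ≤ Cl := le_trans zero_le_one hCl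
  have hCw0 : (0:ℝ) ≤ Cw := le_trans zero_le_one hCw
  have hCd0 : (0:ℝ) ≤ Cd := le_trans zero_le_one hCd
  have c1 : ‖∑ n ∈ B, Real.sign (c n) • b.e n‖ ≤ Cw * (Cl * ‖y‖) :=
    h3.trans (mul_le_mul_of_nonneg_left htr hCw0)
  have c2 : ‖∑ n ∈ B, b.e n‖ ≤ 2 * Cl * (Cw * (Cl * ‖y‖)) :=
    h4.trans (mul_le_mul_of_nonneg_left c1 (by linarith))
  have c3 : ‖∑ i ∈ A, b.e i‖ ≤ Cd * (2 * Cl * (Cw * (Cl * ‖y‖))) :=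
    h5.trans (mul_le_mul_of_nonneg_left c2 hCd0)
  have c4 : ‖∑ i ∈ A, ε i • b.e i‖ ≤ 2 * Cl * (Cd * (2 * Cl * (Cw * (Cl * ‖y‖)))) :=
    h6.trans (mul_le_mul_of_nonneg_left c3 (by linarith))
  have hfin : Cl + 4 * Cw * Cl ^ 3 * Cd ≤ 8 * Cw * Cl ^ 3 * Cd := by
    have hsq : 1 ≤ Cl ^ 2 := by nlinarith
    have a1 : Cl ≤ Cl ^ 3 := by nlinarith [mul_le_mul_of_nonneg_left hsq hCl0]
    have hwd : 1 ≤ Cw * Cd := by nlinarith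
    have a2 : Cl ^ 3 * 1 ≤ Cl ^ 3 * (Cw * Cd) :=
      mul_le_mul_of_nonneg_left hwd (pow_nonneg hCl0 3)
    nlinarith [a1, a2]
  calc ‖x + ∑ i ∈ A, ε i • b.e i‖
      ≤ ‖x‖ + ‖∑ i ∈ A, ε i • b.e i‖ := norm_add_le _ _
    _ ≤ Cl * ‖y‖ + 2 * Cl * (Cd * (2 * Cl * (Cw * (Cl * ‖y‖)))) := add_le_add h_x c4
    _ = (Cl + 4 * Cw * Cl ^ 3 * Cd) * ‖y‖ := by ring
    _ ≤ 8 * Cw * Cl ^ 3 * Cd * ‖y‖ :=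
        mul_le_mul_of_nonneg_right hfin (norm_nonneg y)
end

section
/- For each N ∈ ℕ, consider the (2N−1)-dimensional space X_N with norm ‖(a_i)‖ = max{(Σ_{i=1}^{2N−1}|a_i|²)^{1/2}, sup_{N≤m≤2N−1}|Σ_{i=N}^m a_i/√(i−N+1)|}. Then the canonical basis (f_i^N) of X_N is quasi-greedy with constant at most 3 + √2: for every (a_i) with ‖(a_i)‖ ≤ 1, every ε > 0, and every M ∈ [N, 2N−1], with Λ = {N ≤ i ≤ M : |a_i| > ε}, one has |Σ_{i∈Λ} a_i/√(i−N+1)| ≤ 3 + √2. -/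
private lemma harm_bound (m : ℕ) :
    ∑ k ∈ Finset.Icc 1 m, 1 / Real.sqrt k ≤ 2 * Real.sqrt m := by
  induction m with
  | zero => simp
  | succ m ih =>
    rw [Finset.sum_Icc_succ_top (by omega)]
    have hy : Real.sqrt ((m : ℝ) + 1) > 0 := by positivity
    have hx2 : Real.sqrt m ^ 2 = m := Real.sq_sqrt (by positivity)
    have hy2 : Real.sqrt ((m : ℝ) + 1) ^ 2 = (m : ℝ) + 1 :=
      Real.sq_sqrt (by positivity)
    have hcast : ((m + 1 : ℕ) : ℝ) = (m : ℝ) + 1 := by push_cast; ring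
    rw [hcast]
    have hkey : 1 / Real.sqrt ((m : ℝ) + 1) ≤
        2 * Real.sqrt ((m : ℝ) + 1) - 2 * Real.sqrt m := by
      rw [div_le_iff₀ hy]
      nlinarith [sq_nonneg (Real.sqrt m - Real.sqrt ((m : ℝ) + 1))]
    linarith

private lemma reindex_sum (N m : ℕ) :
    ∑ i ∈ Finset.Icc N (N + m), 1 / Real.sqrt ((i : ℝ) - N + 1)
      = ∑ k ∈ Finset.Icc 1 (m + 1), 1 / Real.sqrt k := by
  induction m with
  | zero => simp
  | succ m ih =>
    rw [show N + (m + 1) = (N + m) + 1 from rfl,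
      Finset.sum_Icc_succ_top (by omega), ih,
      Finset.sum_Icc_succ_top (by omega : 1 ≤ m + 1 + 1)]
    congr 2
    push_cast
    ring

/-- Quasi-greediness bound for the Konyagin–Temlyakov spaces `X_N`: if
`‖(a_i)‖_{X_N} ≤ 1` (both components of the norm are `≤ 1`), then for every
threshold `ε > 0` and every `M ∈ [N, 2N−1]`, the thresholded partial sum over
`Λ = {N ≤ i ≤ M : |a_i| > ε}` satisfies
`|∑_{i∈Λ} a_i/√(i−N+1)| ≤ 3 + √2`. -/
theorem stmt10 (N : ℕ) (hN : 1 ≤ N) (a : ℕ → ℝ)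
    (hℓ2 : Real.sqrt (∑ i ∈ Finset.Icc 1 (2 * N - 1), (a i) ^ 2) ≤ 1)
    (hsup : ∀ m ∈ Finset.Icc N (2 * N - 1),
      |∑ i ∈ Finset.Icc N m, a i / Real.sqrt (i - N + 1)| ≤ 1)
    (ε : ℝ) (hε : 0 < ε) (M : ℕ) (hM : M ∈ Finset.Icc N (2 * N - 1)) :
    |∑ i ∈ (Finset.Icc N M).filter (fun i => ε < |a i|),
        a i / Real.sqrt (i - N + 1)| ≤ 3 + Real.sqrt 2 := by
  rw [Finset.mem_Icc] at hM
  obtain ⟨hNM, hM2⟩ := hM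
  set T : ℕ → ℝ := fun i => a i / Real.sqrt ((i : ℝ) - N + 1) with hT
  have hSnn : (0 : ℝ) ≤ ∑ i ∈ Finset.Icc 1 (2 * N - 1), (a i) ^ 2 :=
    Finset.sum_nonneg fun i _ => sq_nonneg _
  have hS1 : ∑ i ∈ Finset.Icc 1 (2 * N - 1), (a i) ^ 2 ≤ 1 := by
    nlinarith [Real.sq_sqrt hSnn, Real.sqrt_nonneg
      (∑ i ∈ Finset.Icc 1 (2 * N - 1), (a i) ^ 2)]
  have hsub : ∀ t : Finset ℕ, t ⊆ Finset.Icc N M → ∑ i ∈ t, (a i) ^ 2 ≤ 1 := by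
    intro t ht
    refine le_trans (Finset.sum_le_sum_of_subset_of_nonneg ?_
      (fun i _ _ => sq_nonneg _)) hS1
    intro i hi
    have := Finset.mem_Icc.mp (ht hi)
    rw [Finset.mem_Icc]
    omega
  set Λ : Finset ℕ := (Finset.Icc N M).filter (fun i => ε < |a i|) with hΛ
  have hcardR : (Λ.card : ℝ) * ε ^ 2 ≤ 1 := by
    have h1 : ∑ _i ∈ Λ, ε ^ 2 ≤ ∑ i ∈ Λ, (a i) ^ 2 := by
      refine Finset.sum_le_sum fun i hi => ?_
      have hεi : ε < |a i| := (Finset.mem_filter.mp hi).2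
      nlinarith [abs_nonneg (a i), sq_abs (a i)]
    have h2 : ∑ i ∈ Λ, (a i) ^ 2 ≤ 1 := hsub Λ (Finset.filter_subset _ _)
    rw [Finset.sum_const, nsmul_eq_mul] at h1
    linarith
  set n : ℕ := ⌊(ε ^ 2)⁻¹⌋₊ with hn
  have hcardn : Λ.card ≤ n := by
    apply Nat.le_floor
    rw [inv_eq_one_div, le_div_iff₀ (by positivity)]
    exact hcardR
  have hn_le : (n : ℝ) ≤ (ε ^ 2)⁻¹ := Nat.floor_le (by positivity)
  have hεn : ε * Real.sqrt n ≤ 1 := by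
    have h1 : Real.sqrt n ≤ Real.sqrt ((ε ^ 2)⁻¹) := Real.sqrt_le_sqrt hn_le
    have h2 : Real.sqrt ((ε ^ 2)⁻¹) = ε⁻¹ := by
      rw [Real.sqrt_inv, Real.sqrt_sq hε.le]
    rw [h2] at h1
    calc ε * Real.sqrt n ≤ ε * ε⁻¹ := mul_le_mul_of_nonneg_left h1 hε.le
      _ = 1 := mul_inv_cancel₀ (ne_of_gt hε)
  have hw_pos : ∀ i : ℕ, N ≤ i → (0 : ℝ) < Real.sqrt ((i : ℝ) - N + 1) := by
    intro i hi
    apply Real.sqrt_pos.mpr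
    have : (N : ℝ) ≤ (i : ℝ) := by exact_mod_cast hi
    linarith
  -- key: bound for thresholded sums over short initial intervals
  have key : ∀ Q : ℕ, N ≤ Q → Q ≤ 2 * N - 1 → Q - N + 1 ≤ n →
      |∑ i ∈ (Finset.Icc N Q).filter (fun i => ε < |a i|), T i| ≤ 3 := by
    intro Q hQ1 hQ2 hQn
    have hSQ : |∑ i ∈ Finset.Icc N Q, T i| ≤ 1 :=
      hsup Q (Finset.mem_Icc.mpr ⟨hQ1, hQ2⟩)
    have hsplit := Finset.sum_filter_add_sum_filter_not (Finset.Icc N Q)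
      (fun i => ε < |a i|) T
    have hΓ : |∑ i ∈ (Finset.Icc N Q).filter (fun i => ¬ ε < |a i|), T i| ≤ 2 := by
      have h1 : |∑ i ∈ (Finset.Icc N Q).filter (fun i => ¬ ε < |a i|), T i|
          ≤ ∑ i ∈ (Finset.Icc N Q).filter (fun i => ¬ ε < |a i|), |T i| :=
        Finset.abs_sum_le_sum_abs _ _
      have h2 : ∑ i ∈ (Finset.Icc N Q).filter (fun i => ¬ ε < |a i|), |T i|
          ≤ ∑ i ∈ (Finset.Icc N Q).filter (fun i => ¬ ε < |a i|),
              ε * (1 / Real.sqrt ((i : ℝ) - N + 1)) := by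
        refine Finset.sum_le_sum fun i hi => ?_
        obtain ⟨hiI, hip⟩ := Finset.mem_filter.mp hi
        have hiN : N ≤ i := (Finset.mem_Icc.mp hiI).1
        have hwp := hw_pos i hiN
        have hai : |a i| ≤ ε := le_of_not_gt hip
        show |a i / Real.sqrt ((i : ℝ) - N + 1)| ≤ _
        rw [abs_div, abs_of_nonneg (Real.sqrt_nonneg ((i : ℝ) - N + 1)),
          div_le_iff₀ hwp, mul_assoc, one_div, inv_mul_cancel₀ (ne_of_gt hwp),
          mul_one]
        exact hai
      have h3 : ∑ i ∈ (Finset.Icc N Q).filter (fun i => ¬ ε < |a i|),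
            ε * (1 / Real.sqrt ((i : ℝ) - N + 1))
          ≤ ∑ i ∈ Finset.Icc N Q, ε * (1 / Real.sqrt ((i : ℝ) - N + 1)) := by
        refine Finset.sum_le_sum_of_subset_of_nonneg (Finset.filter_subset _ _)
          fun i hi _ => ?_
        have := hw_pos i (Finset.mem_Icc.mp hi).1
        positivity
      have h4 : ∑ i ∈ Finset.Icc N Q, ε * (1 / Real.sqrt ((i : ℝ) - N + 1))
          ≤ 2 := by
        rw [← Finset.mul_sum]
        obtain ⟨m, hm⟩ : ∃ m, Q = N + m := ⟨Q - N, by omega⟩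
        subst hm
        rw [reindex_sum]
        have hh := harm_bound (m + 1)
        have hmn : ((m + 1 : ℕ) : ℝ) ≤ (n : ℝ) := by
          exact_mod_cast (by omega : m + 1 ≤ n)
        have hmono : Real.sqrt ((m + 1 : ℕ)) ≤ Real.sqrt n :=
          Real.sqrt_le_sqrt hmn
        calc ε * ∑ k ∈ Finset.Icc 1 (m + 1), 1 / Real.sqrt k
            ≤ ε * (2 * Real.sqrt ((m + 1 : ℕ))) :=
              mul_le_mul_of_nonneg_left (by exact_mod_cast hh) hε.le
          _ ≤ ε * (2 * Real.sqrt n) :=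
              mul_le_mul_of_nonneg_left (by linarith) hε.le
          _ = 2 * (ε * Real.sqrt n) := by ring
          _ ≤ 2 := by linarith
      linarith
    calc |∑ i ∈ (Finset.Icc N Q).filter (fun i => ε < |a i|), T i|
        = |∑ i ∈ Finset.Icc N Q, T i
            - ∑ i ∈ (Finset.Icc N Q).filter (fun i => ¬ ε < |a i|), T i| := by
          rw [← hsplit]; ring_nf
      _ ≤ |∑ i ∈ Finset.Icc N Q, T i|
            + |∑ i ∈ (Finset.Icc N Q).filter (fun i => ¬ ε < |a i|), T i| :=
          abs_sub _ _
      _ ≤ 3 := by linarith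
  have hsqrt2 : (1 : ℝ) ≤ Real.sqrt 2 := by
    rw [show (1 : ℝ) = Real.sqrt 1 from (Real.sqrt_one).symm]
    exact Real.sqrt_le_sqrt (by norm_num)
  by_cases hn0 : n = 0
  · have hΛe : Λ = ∅ := Finset.card_eq_zero.mp (by omega)
    rw [hΛe]
    simp only [Finset.sum_empty, abs_zero]
    linarith
  · by_cases hcase : M < N + n
    · have h := key M hNM hM2 (by omega)
      rw [← hΛ] at h
      linarith
    · push_neg at hcase
      set P : ℕ := N + n - 1 with hP
      have hPN : N ≤ P := by omega
      have hP1 : P + 1 = N + n := by omega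
      have hPM : P ≤ M := by omega
      have hP2 : P ≤ 2 * N - 1 := le_trans hPM hM2
      set Λ₂ : Finset ℕ := (Finset.Icc (P + 1) M).filter (fun i => ε < |a i|)
        with hΛ₂
      have hset : (Finset.Icc N M).filter (fun i => ε < |a i|)
          = ((Finset.Icc N P).filter (fun i => ε < |a i|)) ∪ Λ₂ := by
        rw [hΛ₂]
        ext i
        simp only [Finset.mem_filter, Finset.mem_union, Finset.mem_Icc]
        constructor
        · rintro ⟨⟨h1, h2⟩, hp⟩
          rcases le_or_gt i P with h | h
          · exact Or.inl ⟨⟨h1, h⟩, hp⟩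
          · exact Or.inr ⟨⟨h, h2⟩, hp⟩
        · rintro (⟨⟨h1, h2⟩, hp⟩ | ⟨⟨h1, h2⟩, hp⟩) <;>
            exact ⟨⟨by omega, by omega⟩, hp⟩
      have hdisj : Disjoint ((Finset.Icc N P).filter (fun i => ε < |a i|)) Λ₂ := by
        rw [hΛ₂]
        simp only [Finset.disjoint_left, Finset.mem_filter, Finset.mem_Icc]
        rintro i ⟨⟨_, h2⟩, _⟩ ⟨⟨h3, _⟩, _⟩
        omega
      have hsum : ∑ i ∈ Λ, T i
          = ∑ i ∈ (Finset.Icc N P).filter (fun i => ε < |a i|), T i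
            + ∑ i ∈ Λ₂, T i := by
        rw [hΛ, hset, Finset.sum_union hdisj]
      have hA : |∑ i ∈ (Finset.Icc N P).filter (fun i => ε < |a i|), T i| ≤ 3 :=
        key P hPN hP2 (by omega)
      -- tail bound via Cauchy–Schwarz
      have hB : |∑ i ∈ Λ₂, T i| ≤ 1 := by
        have habs : |∑ i ∈ Λ₂, T i|
            ≤ ∑ i ∈ Λ₂, |a i| * (1 / Real.sqrt ((i : ℝ) - N + 1)) := by
          refine le_trans (Finset.abs_sum_le_sum_abs _ _)
            (Finset.sum_le_sum fun i hi => ?_)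
          have hiN : N ≤ i := by
            have := (Finset.mem_Icc.mp (Finset.mem_filter.mp hi).1).1
            omega
          show |a i / Real.sqrt ((i : ℝ) - N + 1)| ≤ _
          rw [abs_div, abs_of_nonneg (Real.sqrt_nonneg ((i : ℝ) - N + 1)),
            div_eq_mul_one_div]
        have hCS := Finset.sum_mul_sq_le_sq_mul_sq Λ₂ (fun i => |a i|)
          (fun i => 1 / Real.sqrt ((i : ℝ) - N + 1))
        have hsubM : Λ₂ ⊆ Finset.Icc N M := by
          intro i hi
          have := Finset.mem_Icc.mp (Finset.mem_filter.mp hi).1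
          rw [Finset.mem_Icc]
          omega
        have h1 : ∑ i ∈ Λ₂, |a i| ^ 2 ≤ 1 := by
          simp only [sq_abs]
          exact hsub Λ₂ hsubM
        have hcard2 : Λ₂.card ≤ n := by
          refine le_trans (Finset.card_le_card ?_) hcardn
          rw [hΛ, hΛ₂]
          refine Finset.filter_subset_filter _ (Finset.Icc_subset_Icc ?_ le_rfl)
          omega
        have h2 : ∑ i ∈ Λ₂, (1 / Real.sqrt ((i : ℝ) - N + 1)) ^ 2 ≤ 1 := by
          have heach : ∀ i ∈ Λ₂,
              (1 / Real.sqrt ((i : ℝ) - N + 1)) ^ 2 ≤ 1 / ((n : ℝ) + 1) := by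
            intro i hi
            have hiP : P + 1 ≤ i :=
              (Finset.mem_Icc.mp (Finset.mem_filter.mp hi).1).1
            have hiNn : N + n ≤ i := by omega
            have hwge : ((n : ℝ) + 1) ≤ (i : ℝ) - N + 1 := by
              have : ((N + n : ℕ) : ℝ) ≤ (i : ℝ) := by exact_mod_cast hiNn
              push_cast at this
              linarith
            have hw0 : (0 : ℝ) < (i : ℝ) - N + 1 :=
              lt_of_lt_of_le (by positivity) hwge
            rw [div_pow, one_pow, Real.sq_sqrt (le_of_lt hw0)]
            exact one_div_le_one_div_of_le (by positivity) hwge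
          calc ∑ i ∈ Λ₂, (1 / Real.sqrt ((i : ℝ) - N + 1)) ^ 2
              ≤ Λ₂.card • (1 / ((n : ℝ) + 1)) :=
                Finset.sum_le_card_nsmul _ _ _ heach
            _ = (Λ₂.card : ℝ) * (1 / ((n : ℝ) + 1)) := by
                rw [nsmul_eq_mul]
            _ ≤ (n : ℝ) * (1 / ((n : ℝ) + 1)) := by
                have : (Λ₂.card : ℝ) ≤ (n : ℝ) := by exact_mod_cast hcard2
                have hpos : (0 : ℝ) ≤ 1 / ((n : ℝ) + 1) := by positivity
                exact mul_le_mul_of_nonneg_right this hpos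
            _ ≤ 1 := by
                rw [mul_one_div, div_le_one (by positivity)]
                linarith
        have hC0 : (0 : ℝ) ≤ ∑ i ∈ Λ₂, |a i| * (1 / Real.sqrt ((i : ℝ) - N + 1)) := by
          refine Finset.sum_nonneg fun i hi => ?_
          have := Real.sqrt_nonneg ((i : ℝ) - N + 1)
          positivity
        have hC1 : ∑ i ∈ Λ₂, |a i| * (1 / Real.sqrt ((i : ℝ) - N + 1)) ≤ 1 := by
          nlinarith [hCS, h1, h2, hC0,
            Finset.sum_nonneg (fun i (_ : i ∈ Λ₂) => sq_nonneg (|a i|)),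
            Finset.sum_nonneg (fun i (_ : i ∈ Λ₂) =>
              sq_nonneg (1 / Real.sqrt ((i : ℝ) - N + 1)))]
        linarith
      calc |∑ i ∈ Λ, T i|
          = |∑ i ∈ (Finset.Icc N P).filter (fun i => ε < |a i|), T i
              + ∑ i ∈ Λ₂, T i| := by rw [hsum]
        _ ≤ |∑ i ∈ (Finset.Icc N P).filter (fun i => ε < |a i|), T i|
              + |∑ i ∈ Λ₂, T i| := abs_add_le _ _
        _ ≤ 3 + 1 := add_le_add hA hB
        _ ≤ 3 + Real.sqrt 2 := by linarith
end

section
/- In the space X_N = span{f_1,…,f_{2N−1}} with norm ‖(a_i)‖ = max{(Σ_{i=1}^{2N−1}|a_i|²)^{1/2}, sup_{N≤m≤2N−1}|Σ_{i=N}^m a_i/√(i−N+1)|}, one has ‖Σ_{i=N}^{2N−1} f_i/√(i−N+1)‖ = Σ_{i=1}^N 1/i, while ‖Σ_{i=N}^{2N−1} (−1)^i f_i/√(i−N+1)‖ = (Σ_{i=1}^N 1/i)^{1/2}. Consequently the ratio of these two norms tends to infinity as N → ∞. -/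
/-- The norm of the Konyagin–Temlyakov `(2N−1)`-dimensional space `X_N`,
evaluated on a vector `a` (regarded as supported on coordinates `1, …, 2N−1`):
`‖a‖ = max{(∑_{i=1}^{2N−1} a_i²)^{1/2}, sup_{N ≤ m ≤ 2N−1} |∑_{i=N}^m a_i/√(i−N+1)|}`. -/
noncomputable def XNnorm (N : ℕ) (a : ℕ → ℝ) : ℝ :=
  max (Real.sqrt (∑ i ∈ Finset.Icc 1 (2 * N - 1), (a i) ^ 2))
    (sSup {r : ℝ | ∃ m ∈ Finset.Icc N (2 * N - 1),
      r = |∑ i ∈ Finset.Icc N m, a i / Real.sqrt (i - N + 1)|})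

/-- The vector `∑_{i=N}^{2N−1} f_i/√(i−N+1)` in `X_N`. -/
noncomputable def ktPos (N : ℕ) : ℕ → ℝ := fun i =>
  if i ∈ Finset.Icc N (2 * N - 1) then (Real.sqrt (i - N + 1))⁻¹ else 0

/-- The vector `∑_{i=N}^{2N−1} (−1)^i f_i/√(i−N+1)` in `X_N`. -/
noncomputable def ktAlt (N : ℕ) : ℕ → ℝ := fun i =>
  if i ∈ Finset.Icc N (2 * N - 1) then (-1 : ℝ) ^ i * (Real.sqrt (i - N + 1))⁻¹ else 0


/-!
Both vectors have squared coefficients `1/(k+1)`, `k < N`, so their `ℓ²` norm is `√H_N` with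
`H_N = ∑_{k<N} 1/(k+1)`. The partial sums in the summing part are harmonic partial sums for `ktPos`,
the largest being `H_N ≥ √H_N`; for `ktAlt` they are, up to sign, partial sums of the alternating
harmonic series, hence in `[0, 1] ⊆ [0, √H_N]`. So the ratio of the norms is `√H_N → ∞`.
-/

open Finset Filter

theorem sum_range_neg_one_pow_mul_mem_Icc {R : Type*} [Ring R] [LinearOrder R]
    [IsOrderedRing R] {f : ℕ → R} (hf : Antitone f) (hf₀ : ∀ k, 0 ≤ f k) (n : ℕ) :
    ∑ k ∈ range n, (-1) ^ k * f k ∈ Set.Icc 0 (f 0) := by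
  induction n generalizing f with
  | zero => simpa using hf₀ 0
  | succ n ih =>
    obtain ⟨hlow, hupp⟩ :=
      ih (f := fun k => f (k + 1)) (hf.comp_monotone fun _ _ h => by omega) fun k => hf₀ _
    have hsplit : ∑ k ∈ range (n + 1), (-1) ^ k * f k
        = f 0 - ∑ k ∈ range n, (-1) ^ k * f (k + 1) := by
      simp only [sum_range_succ', pow_succ, mul_neg_one, neg_mul, sum_neg_distrib, pow_zero,
        one_mul]
      abel
    rw [hsplit]
    exact ⟨sub_nonneg.mpr (hupp.trans (hf zero_le_one)), sub_le_self _ hlow⟩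

theorem sum_Icc_eq_sum_range_add {M : Type*} [AddCommMonoid M] (g : ℕ → M) (a b : ℕ) :
    ∑ i ∈ Icc a b, g i = ∑ k ∈ range (b + 1 - a), g (a + k) := by
  rw [← Ico_add_one_right_eq_Icc, sum_Ico_eq_sum_range]

theorem sum_Icc_one_div_eq_sum_range (N : ℕ) :
    ∑ i ∈ Icc 1 N, (1 : ℝ) / i = ∑ k ∈ range N, (1 : ℝ) / (k + 1) := by
  simp [sum_Icc_eq_sum_range_add, add_comm]

theorem inv_sqrt_div_sqrt {x : ℝ} (hx : 0 ≤ x) : (√x)⁻¹ / √x = 1 / x := by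
  rw [div_eq_mul_inv, ← mul_inv, Real.mul_self_sqrt hx, one_div]

theorem sqrt_natCast_add_sub_add_one (N k : ℕ) :
    √(((N + k : ℕ) : ℝ) - N + 1) = √((k : ℝ) + 1) := by
  push_cast
  ring_nf

theorem XNnorm_eq_of_isGreatest {N : ℕ} {a : ℕ → ℝ} {c : ℝ}
    (hc : IsGreatest {r : ℝ | ∃ m ∈ Icc N (2 * N - 1),
      r = |∑ i ∈ Icc N m, a i / √(i - N + 1)|} c)
    (hle : √(∑ i ∈ Icc 1 (2 * N - 1), a i ^ 2) ≤ c) :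
    XNnorm N a = c := by
  rw [XNnorm, hc.csSup_eq, max_eq_right hle]

theorem XNnorm_eq_sqrt_of_forall_le {N : ℕ} (hN : 1 ≤ N) {a : ℕ → ℝ}
    (hle : ∀ m ∈ Icc N (2 * N - 1),
      |∑ i ∈ Icc N m, a i / √(i - N + 1)| ≤ √(∑ i ∈ Icc 1 (2 * N - 1), a i ^ 2)) :
    XNnorm N a = √(∑ i ∈ Icc 1 (2 * N - 1), a i ^ 2) := by
  have hne : N ∈ Icc N (2 * N - 1) := by simp only [mem_Icc]; omega
  refine max_eq_left (csSup_le ⟨_, N, hne, rfl⟩ ?_)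
  rintro _ ⟨m, hm, rfl⟩
  exact hle m hm

theorem one_le_sum_range_one_div {N : ℕ} (hN : 1 ≤ N) :
    1 ≤ ∑ k ∈ range N, (1 : ℝ) / (k + 1) := by
  simpa using single_le_sum (f := fun k : ℕ => (1 : ℝ) / (k + 1))
    (fun _ _ => by positivity) (mem_range.mpr hN)

section Vectors

variable {N k m : ℕ}

theorem add_mem_Icc_two_mul_sub_one (hk : k < N) : N + k ∈ Icc N (2 * N - 1) := by
  simp only [mem_Icc]
  omega

theorem ktPos_add (hk : k < N) : ktPos N (N + k) = (√((k : ℝ) + 1))⁻¹ := by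
  rw [ktPos, if_pos (add_mem_Icc_two_mul_sub_one hk), sqrt_natCast_add_sub_add_one]

theorem ktAlt_add (hk : k < N) :
    ktAlt N (N + k) = (-1) ^ N * ((-1) ^ k * (√((k : ℝ) + 1))⁻¹) := by
  rw [ktAlt, if_pos (add_mem_Icc_two_mul_sub_one hk), sqrt_natCast_add_sub_add_one, pow_add,
    mul_assoc]

theorem ktAlt_sq (i : ℕ) : ktAlt N i ^ 2 = ktPos N i ^ 2 := by
  unfold ktAlt ktPos
  split_ifs
  · rw [mul_pow, ← pow_mul, pow_mul', neg_one_sq, one_pow, one_mul]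
  · rfl

theorem ktPos_partial_sum (hN : 1 ≤ N) (hm : m ∈ Icc N (2 * N - 1)) :
    ∑ i ∈ Icc N m, ktPos N i / √(i - N + 1) = ∑ k ∈ range (m + 1 - N), (1 : ℝ) / (k + 1) := by
  rw [sum_Icc_eq_sum_range_add]
  refine sum_congr rfl fun k hk => ?_
  have hkN : k < N := by have := mem_range.mp hk; have := mem_Icc.mp hm; omega
  rw [ktPos_add hkN, sqrt_natCast_add_sub_add_one, inv_sqrt_div_sqrt (by positivity)]

theorem ktAlt_partial_sum (hN : 1 ≤ N) (hm : m ∈ Icc N (2 * N - 1)) :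
    ∑ i ∈ Icc N m, ktAlt N i / √(i - N + 1)
      = (-1) ^ N * ∑ k ∈ range (m + 1 - N), (-1) ^ k * ((1 : ℝ) / (k + 1)) := by
  rw [sum_Icc_eq_sum_range_add, mul_sum]
  refine sum_congr rfl fun k hk => ?_
  have hkN : k < N := by have := mem_range.mp hk; have := mem_Icc.mp hm; omega
  rw [ktAlt_add hkN, sqrt_natCast_add_sub_add_one, mul_div_assoc, mul_div_assoc,
    inv_sqrt_div_sqrt (by positivity)]

theorem sum_sq_ktPos (hN : 1 ≤ N) :
    ∑ i ∈ Icc 1 (2 * N - 1), ktPos N i ^ 2 = ∑ k ∈ range N, (1 : ℝ) / (k + 1) := by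
  have hwindow : Icc N (2 * N - 1) ⊆ Icc 1 (2 * N - 1) := Icc_subset_Icc hN le_rfl
  rw [← sum_subset hwindow fun i _ hi => by rw [ktPos, if_neg hi, sq, zero_mul],
    sum_Icc_eq_sum_range_add, show 2 * N - 1 + 1 - N = N by omega]
  refine sum_congr rfl fun k hk => ?_
  rw [ktPos_add (mem_range.mp hk), inv_pow, Real.sq_sqrt (by positivity), one_div]

theorem sum_sq_ktAlt (hN : 1 ≤ N) :
    ∑ i ∈ Icc 1 (2 * N - 1), ktAlt N i ^ 2 = ∑ k ∈ range N, (1 : ℝ) / (k + 1) := by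
  simp_rw [ktAlt_sq]
  exact sum_sq_ktPos hN

theorem XNnorm_ktPos (hN : 1 ≤ N) :
    XNnorm N (ktPos N) = ∑ k ∈ range N, (1 : ℝ) / (k + 1) := by
  have hlast : 2 * N - 1 ∈ Icc N (2 * N - 1) := by simp only [mem_Icc]; omega
  refine XNnorm_eq_of_isGreatest ⟨?_, ?_⟩ ?_
  · refine ⟨2 * N - 1, hlast, ?_⟩
    rw [ktPos_partial_sum hN hlast, show 2 * N - 1 + 1 - N = N by omega,
      abs_of_nonneg (by positivity)]
  · rintro r ⟨m, hm, rfl⟩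
    rw [ktPos_partial_sum hN hm, abs_of_nonneg (by positivity)]
    have hle : m + 1 - N ≤ N := by have := mem_Icc.mp hm; omega
    exact sum_le_sum_of_subset_of_nonneg (range_subset_range.mpr hle) fun _ _ _ => by positivity
  · rw [sum_sq_ktPos hN]
    exact Real.sqrt_le_self_iff.mpr (Or.inr (one_le_sum_range_one_div hN))

theorem XNnorm_ktAlt (hN : 1 ≤ N) :
    XNnorm N (ktAlt N) = √(∑ k ∈ range N, (1 : ℝ) / (k + 1)) := by
  rw [← sum_sq_ktAlt hN]
  refine XNnorm_eq_sqrt_of_forall_le hN fun m hm => ?_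
  have hanti : Antitone fun k : ℕ => (1 : ℝ) / (k + 1) := fun a b h => by dsimp; gcongr
  obtain ⟨hlow, hupp⟩ :=
    sum_range_neg_one_pow_mul_mem_Icc hanti (fun _ => by positivity) (m + 1 - N)
  rw [ktAlt_partial_sum hN hm, abs_mul, abs_neg_one_pow, one_mul, abs_of_nonneg hlow,
    sum_sq_ktAlt hN]
  calc _ ≤ 1 := by simpa using hupp
    _ ≤ _ := Real.one_le_sqrt.mpr (one_le_sum_range_one_div hN)

end Vectors

/-- In `X_N`, `‖∑_{i=N}^{2N−1} f_i/√(i−N+1)‖ = ∑_{i=1}^N 1/i` while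
`‖∑_{i=N}^{2N−1} (−1)^i f_i/√(i−N+1)‖ = (∑_{i=1}^N 1/i)^{1/2}`; consequently the
ratio of these norms tends to infinity as `N → ∞`. -/
theorem stmt11 :
    (∀ N : ℕ, 1 ≤ N →
      XNnorm N (ktPos N) = ∑ i ∈ Finset.Icc 1 N, (1 : ℝ) / i ∧
      XNnorm N (ktAlt N) = Real.sqrt (∑ i ∈ Finset.Icc 1 N, (1 : ℝ) / i)) ∧
    Filter.Tendsto (fun N : ℕ => XNnorm N (ktPos N) / XNnorm N (ktAlt N))
      Filter.atTop Filter.atTop := by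
  refine ⟨fun N hN => ?_, ?_⟩
  · rw [sum_Icc_one_div_eq_sum_range]
    exact ⟨XNnorm_ktPos hN, XNnorm_ktAlt hN⟩
  · refine (Real.tendsto_sqrt_atTop.comp Real.tendsto_sum_range_one_div_nat_succ_atTop).congr' ?_
    filter_upwards [eventually_ge_atTop 1] with N hN
    rw [XNnorm_ktPos hN, XNnorm_ktAlt hN, Real.div_sqrt, Function.comp_apply]
end

section
/- Let X be the completion of c_00 under the norm ‖x‖ = Σ_{i even}|x_i| + (Σ_{i odd}|x_i|²)^{1/2}. Then the canonical basis is 1-unconditional but not S_1-disjoint democratic: for A = {1,3,…,2N−1} and B = {2N, 2N+2, …, 4N−2} ∈ S_1 one has ‖1_A‖ = √N and ‖1_B‖ = N, so ‖1_B‖/‖1_A‖ → ∞. -/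
/-- The norm `‖x‖ = ∑_{i even}|x_i| + (∑_{i odd} x_i²)^{1/2}` of the space of
Subsection "An (∞,0)-quasi-greedy basis", evaluated on a vector `x` supported
on the finite set `s`. -/
noncomputable def mixedNorm (s : Finset ℕ) (x : ℕ → ℝ) : ℝ :=
  (∑ i ∈ s.filter (fun i => Even i), |x i|) +
    Real.sqrt (∑ i ∈ s.filter (fun i => Odd i), (x i) ^ 2)

/-- The set `A = {1, 3, …, 2N−1}`. -/
def oddSet (N : ℕ) : Finset ℕ := (Finset.Icc 1 N).image (fun k => 2 * k - 1)

/-- The set `B = {2N, 2N+2, …, 4N−2}`. -/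
def evenSet (N : ℕ) : Finset ℕ := (Finset.Icc 1 N).image (fun k => 2 * N + 2 * (k - 1))

lemma mem_oddSet {N n : ℕ} (h : n ∈ oddSet N) : Odd n ∧ n ≤ 2 * N - 1 := by
  simp only [oddSet, Finset.mem_image, Finset.mem_Icc] at h
  obtain ⟨k, ⟨hk1, hk2⟩, rfl⟩ := h
  exact ⟨⟨k - 1, by omega⟩, by omega⟩

lemma mem_evenSet {N n : ℕ} (h : n ∈ evenSet N) : Even n ∧ 2 * N ≤ n := by
  simp only [evenSet, Finset.mem_image, Finset.mem_Icc] at h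
  obtain ⟨k, ⟨hk1, hk2⟩, rfl⟩ := h
  exact ⟨⟨N + (k - 1), by ring⟩, by omega⟩

lemma oddSet_card (N : ℕ) : (oddSet N).card = N := by
  rw [oddSet, Finset.card_image_of_injOn, Nat.card_Icc]
  · omega
  · intro a ha b hb hab
    simp only [Finset.coe_Icc, Set.mem_Icc] at ha hb
    simp only at hab
    omega

lemma evenSet_card (N : ℕ) : (evenSet N).card = N := by
  rw [evenSet, Finset.card_image_of_injOn, Nat.card_Icc]
  · omega
  · intro a ha b hb hab
    simp only [Finset.coe_Icc, Set.mem_Icc] at ha hb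
    simp only at hab
    omega

lemma mixedNorm_oddSet (N : ℕ) : mixedNorm (oddSet N) (fun _ => 1) = Real.sqrt N := by
  have h1 : (oddSet N).filter (fun i => Even i) = ∅ := by
    rw [Finset.filter_eq_empty_iff]
    exact fun n hn => Nat.not_even_iff_odd.mpr (mem_oddSet hn).1
  have h2 : (oddSet N).filter (fun i => Odd i) = oddSet N := by
    rw [Finset.filter_eq_self]
    exact fun n hn => (mem_oddSet hn).1
  simp [mixedNorm, h1, h2, oddSet_card]

lemma mixedNorm_evenSet (N : ℕ) : mixedNorm (evenSet N) (fun _ => 1) = N := by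
  have h1 : (evenSet N).filter (fun i => Even i) = evenSet N := by
    rw [Finset.filter_eq_self]
    exact fun n hn => (mem_evenSet hn).1
  have h2 : (evenSet N).filter (fun i => Odd i) = ∅ := by
    rw [Finset.filter_eq_empty_iff]
    exact fun n hn h => (Nat.not_even_iff_odd.mpr h) (mem_evenSet hn).1
  simp [mixedNorm, h1, h2, evenSet_card]

lemma sqrt_nat_tendsto : Filter.Tendsto (fun N : ℕ => Real.sqrt N) Filter.atTop Filter.atTop := by
  rw [Filter.tendsto_atTop]
  intro b
  filter_upwards [Filter.eventually_ge_atTop ⌈b ^ 2⌉₊] with N hN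
  by_cases hb : b ≤ 0
  · exact le_trans hb (Real.sqrt_nonneg _)
  · push_neg at hb
    have h1 : b ^ 2 ≤ (N : ℝ) := le_trans (Nat.le_ceil _) (by exact_mod_cast hN)
    calc b = Real.sqrt (b ^ 2) := (Real.sqrt_sq hb.le).symm
    _ ≤ Real.sqrt N := Real.sqrt_le_sqrt h1

/-- The canonical basis of the completion of `c₀₀` under
`‖x‖ = ∑_{i even}|x_i| + (∑_{i odd} x_i²)^{1/2}` is 1-unconditional, but for
`A = {1,3,…,2N−1}` and `B = {2N,…,4N−2} ∈ S₁` one has `‖1_A‖ = √N`, `‖1_B‖ = N`,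
so `‖1_B‖/‖1_A‖ → ∞` and the basis is not `S₁`-disjoint democratic. -/
theorem stmt12 :
    (∀ (s : Finset ℕ) (x ε : ℕ → ℝ), (∀ i, |ε i| ≤ 1) →
      mixedNorm s (fun i => ε i * x i) ≤ mixedNorm s x) ∧
    (∀ N : ℕ, 1 ≤ N →
      mixedNorm (oddSet N) (fun _ => 1) = Real.sqrt N ∧
      mixedNorm (evenSet N) (fun _ => 1) = N ∧
      (oddSet N).card ≤ (evenSet N).card ∧
      Disjoint (oddSet N) (evenSet N) ∧
      (∀ a ∈ evenSet N, (evenSet N).card ≤ a)) ∧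
    Filter.Tendsto
      (fun N : ℕ => mixedNorm (evenSet N) (fun _ => 1) / mixedNorm (oddSet N) (fun _ => 1))
      Filter.atTop Filter.atTop := by
  refine ⟨?_, ?_, ?_⟩
  · intro s x ε hε
    unfold mixedNorm
    have hA : ∑ i ∈ s.filter (fun i => Even i), |ε i * x i| ≤
        ∑ i ∈ s.filter (fun i => Even i), |x i| := by
      refine Finset.sum_le_sum fun i _ => ?_
      rw [abs_mul]
      calc |ε i| * |x i| ≤ 1 * |x i| := mul_le_mul_of_nonneg_right (hε i) (abs_nonneg _)
      _ = |x i| := one_mul _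
    have hB : ∑ i ∈ s.filter (fun i => Odd i), (ε i * x i) ^ 2 ≤
        ∑ i ∈ s.filter (fun i => Odd i), (x i) ^ 2 := by
      refine Finset.sum_le_sum fun i _ => ?_
      obtain ⟨h1, h2⟩ := abs_le.mp (hε i)
      have h3 : (ε i) ^ 2 ≤ 1 := by nlinarith
      rw [mul_pow]
      nlinarith [sq_nonneg (x i)]
    exact add_le_add hA (Real.sqrt_le_sqrt hB)
  · intro N hN
    refine ⟨mixedNorm_oddSet N, mixedNorm_evenSet N, ?_, ?_, ?_⟩
    · rw [oddSet_card, evenSet_card]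
    · rw [Finset.disjoint_left]
      intro n hn h
      exact (Nat.not_even_iff_odd.mpr (mem_oddSet hn).1) (mem_evenSet h).1
    · intro a ha
      rw [evenSet_card]
      have := (mem_evenSet ha).2; omega
  · refine Filter.Tendsto.congr' ?_ sqrt_nat_tendsto
    filter_upwards with N
    rw [mixedNorm_oddSet, mixedNorm_evenSet]
    exact Real.div_sqrt.symm
end

section
/- Let X = (⊕_{N=1}^∞ X_N)_{ℓ₂} where X_N has norm ‖(a_i)‖ = max{(Σ_{i=1}^{2N−1}|a_i|²)^{1/2}, sup_{N≤m≤2N−1}|Σ_{i=N}^m a_i/√(i−N+1)|}. Then the canonical basis B of X is democratic with constant 2: for every nonempty finite A ⊆ B, |A|^{1/2} ≤ ‖Σ_{e∈A} e‖ ≤ 2|A|^{1/2}. -/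
lemma sum_inv_sqrt_le (k : ℕ) :
    ∑ j ∈ Finset.Icc 1 k, 1 / Real.sqrt j ≤ 2 * Real.sqrt k := by
  induction k with
  | zero => simp
  | succ n ih =>
    rw [Finset.sum_Icc_succ_top (by omega)]
    have hb : (0:ℝ) < Real.sqrt (n+1) := Real.sqrt_pos.2 (by positivity)
    have han : Real.sqrt n ^ 2 = n := Real.sq_sqrt (by positivity)
    have hbn : Real.sqrt (n+1) ^ 2 = (n:ℝ)+1 := Real.sq_sqrt (by positivity)
    have key : 1 / Real.sqrt ((n:ℝ)+1) ≤ 2 * Real.sqrt ((n:ℝ)+1) - 2 * Real.sqrt n := by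
      rw [div_le_iff₀ hb]
      nlinarith [sq_nonneg (Real.sqrt ((n:ℝ)+1) - Real.sqrt n)]
    push_cast
    linarith

lemma set_sum_le (n : ℕ) : ∀ (S : Finset ℕ), S.card = n → (∀ i ∈ S, 1 ≤ i) →
    ∑ i ∈ S, 1 / Real.sqrt i ≤ ∑ j ∈ Finset.Icc 1 n, 1 / Real.sqrt j := by
  induction n with
  | zero =>
    intro S hc _
    rw [Finset.card_eq_zero] at hc
    subst hc; simp
  | succ n ih =>
    intro S hc h1
    have hne : S.Nonempty := Finset.card_pos.1 (by omega)
    set M := S.max' hne with hM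
    have hMS : M ∈ S := S.max'_mem hne
    have herase : (S.erase M).card = n := by rw [Finset.card_erase_of_mem hMS, hc]; omega
    have hsub : S ⊆ Finset.Icc 1 M := fun i hi =>
      Finset.mem_Icc.2 ⟨h1 i hi, S.le_max' i hi⟩
    have hMcard : n + 1 ≤ M := by
      have := Finset.card_le_card hsub
      rw [hc, Nat.card_Icc] at this
      omega
    have hmain := ih (S.erase M) herase (fun i hi => h1 i (Finset.mem_of_mem_erase hi))
    rw [← Finset.sum_erase_add S _ hMS, Finset.sum_Icc_succ_top (by omega : 1 ≤ n+1)]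
    have hle : 1 / Real.sqrt M ≤ 1 / Real.sqrt (n+1) := by
      apply one_div_le_one_div_of_le (Real.sqrt_pos.2 (by positivity))
      exact Real.sqrt_le_sqrt (by exact_mod_cast hMcard)
    push_cast at hle ⊢
    linarith


/-- The canonical basis of `X = (⊕_N X_N)_{ℓ₂}` is democratic with constant 2:
for every nonempty finite set `A` of basis vectors (encoded as pairs `(N, i)`
with `1 ≤ N` and `N ≤ 2N−1`-indexed coordinates `1 ≤ i ≤ 2N−1`),
`√|A| ≤ ‖∑_{e∈A} e‖ ≤ 2√|A|`, where the norm of the block in `X_N` is `XNnorm`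
of the indicator of `A_N = {i : (N, i) ∈ A}` and the blocks are combined in `ℓ₂`. -/
theorem stmt13 (A : Finset (ℕ × ℕ)) (hne : A.Nonempty)
    (hvalid : ∀ p ∈ A, 1 ≤ p.1 ∧ 1 ≤ p.2 ∧ p.2 ≤ 2 * p.1 - 1) :
    Real.sqrt A.card ≤
      Real.sqrt (∑ N ∈ A.image Prod.fst,
        (XNnorm N (fun i => if (N, i) ∈ A then (1 : ℝ) else 0)) ^ 2) ∧
    Real.sqrt (∑ N ∈ A.image Prod.fst,
        (XNnorm N (fun i => if (N, i) ∈ A then (1 : ℝ) else 0)) ^ 2) ≤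
      2 * Real.sqrt A.card := by
  -- fiber cardinalities
  set c : ℕ → ℕ := fun N => (A.filter fun p => p.1 = N).card with hcdef
  have hctot : ∑ N ∈ A.image Prod.fst, c N = A.card :=
    (Finset.card_eq_sum_card_image Prod.fst A).symm
  -- indicator sum of squares
  have hind : ∀ N, (∑ i ∈ Finset.Icc 1 (2 * N - 1),
      ((if (N, i) ∈ A then (1:ℝ) else 0)) ^ 2) = c N := by
    intro N
    have h1 : (∑ i ∈ Finset.Icc 1 (2 * N - 1),
        ((if (N, i) ∈ A then (1:ℝ) else 0)) ^ 2)
        = (((Finset.Icc 1 (2*N-1)).filter fun i => (N, i) ∈ A).card : ℝ) := by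
      rw [← Finset.sum_boole]
      refine Finset.sum_congr rfl fun i _ => ?_
      split <;> norm_num
    rw [h1]
    congr 1
    refine Finset.card_bij (fun i _ => (N, i)) ?_ ?_ ?_
    · intro i hi
      exact Finset.mem_filter.2 ⟨(Finset.mem_filter.1 hi).2, rfl⟩
    · intro i hi j hj h
      simpa using h
    · intro p hp
      simp only [Finset.mem_filter] at hp
      obtain ⟨hpA, hp1⟩ := hp
      subst hp1
      refine ⟨p.2, ?_, ?_⟩
      · simp only [Finset.mem_filter, Finset.mem_Icc]
        obtain ⟨_, h2, h3⟩ := hvalid p hpA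
        exact ⟨⟨h2, h3⟩, by simpa using hpA⟩
      · rfl
  -- lower bound per block
  have hlow : ∀ N, Real.sqrt (c N) ≤
      XNnorm N (fun i => if (N, i) ∈ A then (1:ℝ) else 0) := by
    intro N
    refine le_trans (le_of_eq ?_) (le_max_left _ _)
    rw [hind N]
  -- upper bound per block
  have hup : ∀ N, XNnorm N (fun i => if (N, i) ∈ A then (1:ℝ) else 0)
      ≤ 2 * Real.sqrt (c N) := by
    intro N
    apply max_le
    · rw [hind N]
      nlinarith [Real.sqrt_nonneg (c N : ℝ)]
    · apply Real.sSup_le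
      · rintro r ⟨m, hm, rfl⟩
        set S := (Finset.Icc N m).filter (fun i => (N, i) ∈ A) with hS
        have hsum : (∑ i ∈ Finset.Icc N m,
            (if (N, i) ∈ A then (1:ℝ) else 0) / Real.sqrt (i - N + 1))
            = ∑ i ∈ S, 1 / Real.sqrt ((i:ℝ) - N + 1) := by
          rw [hS, Finset.sum_filter]
          refine Finset.sum_congr rfl fun i _ => ?_
          split <;> simp
        have hSnonneg : (0:ℝ) ≤ ∑ i ∈ S, 1 / Real.sqrt ((i:ℝ) - N + 1) :=
          Finset.sum_nonneg fun i _ => by positivity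
        rw [hsum, abs_of_nonneg hSnonneg]
        -- reindex by t = i - N + 1
        have hinj : ∀ x ∈ S, ∀ y ∈ S, x - N + 1 = y - N + 1 → x = y := by
          intro x hx y hy h
          have hx' := (Finset.mem_Icc.1 (Finset.mem_filter.1 hx).1).1
          have hy' := (Finset.mem_Icc.1 (Finset.mem_filter.1 hy).1).1
          omega
        have hre : ∑ i ∈ S, 1 / Real.sqrt ((i:ℝ) - N + 1)
            = ∑ t ∈ S.image (fun i => i - N + 1), 1 / Real.sqrt t := by
          rw [Finset.sum_image hinj]
          refine Finset.sum_congr rfl fun i hi => ?_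
          have hiN := (Finset.mem_Icc.1 (Finset.mem_filter.1 hi).1).1
          congr 1
          push_cast [Nat.cast_sub hiN]
          ring
        rw [hre]
        set T := S.image (fun i => i - N + 1) with hT
        have hT1 : ∀ t ∈ T, 1 ≤ t := by
          rintro t ht
          obtain ⟨i, _, rfl⟩ := Finset.mem_image.1 ht
          omega
        have h1 := set_sum_le T.card T rfl hT1
        have hTcard : T.card ≤ c N := by
          have hST : T.card = S.card := Finset.card_image_of_injOn hinj
          rw [hST, hcdef]
          apply Finset.card_le_card_of_injOn (fun i => (N, i))
          · intro i hi
            exact Finset.mem_filter.2 ⟨(Finset.mem_filter.1 hi).2, rfl⟩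
          · intro i _ j _ h
            simpa using h
        have h2 : ∑ j ∈ Finset.Icc 1 T.card, 1 / Real.sqrt j
            ≤ ∑ j ∈ Finset.Icc 1 (c N), 1 / Real.sqrt j := by
          apply Finset.sum_le_sum_of_subset_of_nonneg
          · exact Finset.Icc_subset_Icc_right hTcard
          · intro j _ _; positivity
        calc ∑ t ∈ T, 1 / Real.sqrt t
            ≤ ∑ j ∈ Finset.Icc 1 T.card, 1 / Real.sqrt j := h1
          _ ≤ ∑ j ∈ Finset.Icc 1 (c N), 1 / Real.sqrt j := h2
          _ ≤ 2 * Real.sqrt (c N) := sum_inv_sqrt_le (c N)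
      · positivity
  constructor
  · apply Real.sqrt_le_sqrt
    calc (A.card : ℝ) = ∑ N ∈ A.image Prod.fst, (c N : ℝ) := by
          rw [← hctot]; push_cast; ring
      _ ≤ ∑ N ∈ A.image Prod.fst,
            (XNnorm N (fun i => if (N, i) ∈ A then (1:ℝ) else 0)) ^ 2 := by
          refine Finset.sum_le_sum fun N _ => ?_
          have h := hlow N
          have h0 : (0:ℝ) ≤ Real.sqrt (c N) := Real.sqrt_nonneg _
          nlinarith [Real.sq_sqrt (show (0:ℝ) ≤ (c N : ℝ) by positivity)]
  · have hsum4 : (∑ N ∈ A.image Prod.fst,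
        (XNnorm N (fun i => if (N, i) ∈ A then (1:ℝ) else 0)) ^ 2)
        ≤ 4 * A.card := by
      calc (∑ N ∈ A.image Prod.fst,
            (XNnorm N (fun i => if (N, i) ∈ A then (1:ℝ) else 0)) ^ 2)
          ≤ ∑ N ∈ A.image Prod.fst, 4 * (c N : ℝ) := by
            refine Finset.sum_le_sum fun N _ => ?_
            have h := hup N
            have h0 : (0:ℝ) ≤ XNnorm N (fun i => if (N, i) ∈ A then (1:ℝ) else 0) :=
              le_trans (Real.sqrt_nonneg _) (hlow N)
            nlinarith [Real.sq_sqrt (show (0:ℝ) ≤ (c N : ℝ) by positivity)]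
        _ = 4 * A.card := by rw [← Finset.mul_sum, ← hctot]; push_cast; ring
    calc Real.sqrt (∑ N ∈ A.image Prod.fst,
            (XNnorm N (fun i => if (N, i) ∈ A then (1:ℝ) else 0)) ^ 2)
        ≤ Real.sqrt (4 * A.card) := Real.sqrt_le_sqrt hsum4
      _ = 2 * Real.sqrt A.card := by
          rw [show (4:ℝ) * A.card = (2*Real.sqrt A.card)^2 by
            rw [mul_pow, Real.sq_sqrt (by positivity)]; norm_num]
          exact Real.sqrt_sq (by positivity)
end

section
/- For every countable ordinal α and every finite set S of positive integers with min S ≥ 2, there exists m ∈ ℕ such that S ∈ S_{α+m}. -/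
/-- A Schreier system: a transfinite hierarchy of families of finite subsets of
`{1, 2, 3, ...}` following the recursive definition of the Schreier families `S_α`,
with a fixed choice of approximating sequence at each countable limit ordinal. -/
structure SchreierSystem where
  S : Ordinal → Set (Finset ℕ)
  zero : S 0 = {E : Finset ℕ | E.card ≤ 1 ∧ ∀ a ∈ E, 1 ≤ a}
  succ : ∀ α : Ordinal, S (α + 1) = {E : Finset ℕ |
      ∃ (m : ℕ) (Es : Fin m → Finset ℕ),
        (∀ i, Es i ∈ S α) ∧
        (∀ i j : Fin m, i < j → ∀ a ∈ Es i, ∀ b ∈ Es j, a < b) ∧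
        (∀ i, ∀ a ∈ Es i, m ≤ a) ∧
        E = Finset.univ.biUnion Es}
  limit : ∀ α : Ordinal, Order.IsSuccLimit α → α.card ≤ Cardinal.aleph0 →
      ∃ f : ℕ → Ordinal,
        (∀ m, f m + 1 < α) ∧
        (∀ β < α, ∃ m, β ≤ f m + 1) ∧
        (∀ m, S (f m) ⊆ S (f (m + 1))) ∧
        S α = {E : Finset ℕ | ∃ m : ℕ, 1 ≤ m ∧ (∀ a ∈ E, m ≤ a) ∧ E ∈ S (f m + 1)}

/-!
Every set in `S_0` (at most one element, all elements positive) lies in every countable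
level, by transfinite induction, taking a single block at successors and `m = 1` at limits. Two
consecutive blocks `A < B` of `S_β` with all elements `≥ 2` form a set of `S_{β+1}`. Peeling off the
minimum of `S` thus raises the level by one at each step, starting from `∅ ∈ S_α`.
-/

lemma Ordinal.card_add_nat_le_aleph0 {α : Ordinal} (hα : α.card ≤ Cardinal.aleph0) (n : ℕ) :
    (α + n).card ≤ Cardinal.aleph0 := by
  rw [Ordinal.card_add, Ordinal.card_nat]
  exact Cardinal.add_le_aleph0.mpr ⟨hα, Cardinal.natCast_lt_aleph0.le⟩

namespace SchreierSystem

variable (𝒮 : SchreierSystem)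

lemma mem_S_succ_of_mem {α : Ordinal} {E : Finset ℕ} (hE : E ∈ 𝒮.S α) (hpos : ∀ a ∈ E, 1 ≤ a) :
    E ∈ 𝒮.S (α + 1) := by
  rw [𝒮.succ]
  refine ⟨1, fun _ => E, fun _ => hE, fun i j hij => absurd (Subsingleton.elim i j) hij.ne,
    fun _ => hpos, by simp⟩

lemma S_zero_subset (α : Ordinal) (hα : α.card ≤ Cardinal.aleph0) : 𝒮.S 0 ⊆ 𝒮.S α := by
  induction α using WellFoundedLT.induction with
  | ind α ih =>
  intro E hE
  have hpos : ∀ a ∈ E, 1 ≤ a := (𝒮.zero ▸ hE).2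
  rcases Ordinal.zero_or_succ_or_isSuccLimit α with rfl | ⟨β, rfl⟩ | hlim
  · exact hE
  · rw [Order.succ_eq_add_one] at hα ih ⊢
    have hβ : β < β + 1 := Order.lt_add_one_iff.mpr le_rfl
    exact 𝒮.mem_S_succ_of_mem (ih β hβ ((Ordinal.card_le_card hβ.le).trans hα) hE) hpos
  · obtain ⟨f, hf_lt, -, -, hSα⟩ := 𝒮.limit α hlim hα
    rw [hSα]
    exact ⟨1, le_rfl, hpos, ih _ (hf_lt 1) ((Ordinal.card_le_card (hf_lt 1).le).trans hα) hE⟩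

lemma empty_mem_S {α : Ordinal} (hα : α.card ≤ Cardinal.aleph0) : ∅ ∈ 𝒮.S α :=
  𝒮.S_zero_subset α hα (by simp [𝒮.zero])

lemma singleton_mem_S {α : Ordinal} (hα : α.card ≤ Cardinal.aleph0) {a : ℕ} (ha : 1 ≤ a) :
    {a} ∈ 𝒮.S α :=
  𝒮.S_zero_subset α hα (by simp [𝒮.zero, ha])

lemma union_mem_S_succ {β : Ordinal} {A B : Finset ℕ} (hA : A ∈ 𝒮.S β) (hB : B ∈ 𝒮.S β)
    (hAB : ∀ a ∈ A, ∀ b ∈ B, a < b) (h2 : ∀ a ∈ A ∪ B, 2 ≤ a) : A ∪ B ∈ 𝒮.S (β + 1) := by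
  rw [𝒮.succ]
  refine ⟨2, ![A, B], ?_, ?_, ?_, ?_⟩
  · intro i
    fin_cases i
    exacts [hA, hB]
  · intro i j hij
    fin_cases i <;> fin_cases j <;> simp at hij
    exact hAB
  · intro i a ha
    fin_cases i
    exacts [h2 a (Finset.mem_union_left B ha), h2 a (Finset.mem_union_right A ha)]
  · ext x
    simp [Fin.exists_fin_two]

end SchreierSystem

/-- For every countable ordinal `α` and every finite set `S` of positive integers
with `min S ≥ 2`, there exists `m ∈ ℕ` such that `S ∈ S_{α+m}`. -/
theorem stmt19 (𝒮 : SchreierSystem) (α : Ordinal) (hα : α.card ≤ Cardinal.aleph0)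
    (S : Finset ℕ) (hS : ∀ a ∈ S, 2 ≤ a) :
    ∃ m : ℕ, S ∈ 𝒮.S (α + m) := by
  induction S using Finset.induction_on_min with
  | empty => exact ⟨0, by simpa using 𝒮.empty_mem_S hα⟩
  | insert a s ha_lt ih =>
    obtain ⟨m, hm⟩ := ih fun x hx => hS x (Finset.mem_insert_of_mem hx)
    have ha : 2 ≤ a := hS a (Finset.mem_insert_self a s)
    refine ⟨m + 1, ?_⟩
    rw [Nat.cast_succ, ← add_assoc, Finset.insert_eq]
    refine 𝒮.union_mem_S_succ (𝒮.singleton_mem_S (Ordinal.card_add_nat_le_aleph0 hα m) (by omega)) hm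
      (by simpa using ha_lt) ?_
    rwa [← Finset.insert_eq]
end
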